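/- arXiv:2210.07375 — 9 statements merged into one kernel-verified Lean document; each statement's English description precedes it below -/
import Mathlib

section
/- Let U be an even unimodular lattice and let L ⊆ U be a primitive nondegenerate sublattice, with orthogonal complement L^⊥ = {u ∈ U : B(u,x) = 0 for all x ∈ L}. If g is an isometry of U such that g(x) = x for every x ∈ L^⊥, then g(L) = L and the restriction g|_L is a stable isometry of L, i.e. g(v) − v ∈ L for every v ∈ L^∨. (This is one direction of Lemma 2.2: the restriction map Γ(L,U) → O(L) lands in O(L)*.) -/
/-- `v` pairs integrally with every element of the lattice `L`. Together with the
condition `v ∈ spanℚ L`, this says that `v` belongs to the dual lattice `L^∨`. -/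
def InDual {V : Type*} [AddCommGroup V] [Module ℚ V]
    (B : LinearMap.BilinForm ℚ V) (L : Submodule ℤ V) (v : V) : Prop :=
  ∀ y ∈ L, ∃ n : ℤ, B v y = (n : ℚ)

/-- Let `U` be an even unimodular lattice (a full finitely generated
`ℤ`-lattice in a `ℚ`-vector space `V` carrying a nondegenerate symmetric bilinear form `B`
which is integral and even on `U`, with `U^∨ = U`), and let `L ⊆ U` be a primitive
nondegenerate sublattice.  If `g` is an isometry of `U` fixing the orthogonal complement
`L^⊥ = {u ∈ U : B u x = 0 for all x ∈ L}` pointwise, then `g (L) = L` and the restriction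
of `g` to `L` is stable, i.e. `g v - v ∈ L` for every `v ∈ L^∨`. -/
theorem restriction_lands_in_stable_orthogonal_group
    {V : Type*} [AddCommGroup V] [Module ℚ V]
    (B : LinearMap.BilinForm ℚ V)
    (hBsymm : ∀ x y : V, B x y = B y x) (hBnd : B.Nondegenerate)
    (U L : Submodule ℤ V)
    -- `U` is an even unimodular lattice:
    (hUfg : U.FG) (hUspan : Submodule.span ℚ (U : Set V) = ⊤)
    (hUint : ∀ x ∈ U, ∀ y ∈ U, ∃ n : ℤ, B x y = (n : ℚ))
    (hUeven : ∀ x ∈ U, ∃ n : ℤ, B x x = 2 * (n : ℚ))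
    (hUunimodular : ∀ v : V, InDual B U v → v ∈ U)
    -- `L` is a primitive nondegenerate sublattice of `U`:
    (hLU : L ≤ U)
    (hLprim : ∀ x ∈ U, ∀ n : ℤ, n ≠ 0 → n • x ∈ L → x ∈ L)
    (hLnd : ∀ x ∈ L, (∀ y ∈ L, B x y = 0) → x = 0)
    -- `g` is an isometry of `U` fixing `L^⊥` pointwise:
    (g : V ≃ₗ[ℚ] V)
    (hgisom : ∀ x y : V, B (g x) (g y) = B x y)
    (hgU : ∀ x : V, x ∈ U ↔ g x ∈ U)
    (hgfix : ∀ x ∈ U, (∀ y ∈ L, B x y = 0) → g x = x) :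
    (∀ x : V, x ∈ L ↔ g x ∈ L) ∧
      ∀ v : V, v ∈ Submodule.span ℚ (L : Set V) → InDual B L v → g v - v ∈ L := by
    classical
  -- V is finite dimensional over ℚ
  obtain ⟨s, hs⟩ := hUfg
  haveI hfin : Module.Finite ℚ V := by
    refine ⟨⟨s, le_antisymm le_top ?_⟩⟩
    rw [← hUspan]
    refine Submodule.span_le.mpr fun x hx => ?_
    rw [← hs] at hx
    exact Submodule.span_subset_span ℤ ℚ _ hx
  have hrefl : B.IsRefl := fun x y h => by rw [hBsymm]; exact h
  -- every vector has a nonzero integer multiple in any full sublattice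
  have key : ∀ (M : Submodule ℤ V) (z : V), z ∈ Submodule.span ℚ (M : Set V) →
      ∃ n : ℤ, n ≠ 0 ∧ (n : ℚ) • z ∈ M := by
    intro M z hz
    induction hz using Submodule.span_induction with
    | mem x hx => exact ⟨1, one_ne_zero, by simpa using hx⟩
    | zero => exact ⟨1, one_ne_zero, by simp⟩
    | add x y _ _ hx hy =>
        obtain ⟨n, hn, hnx⟩ := hx
        obtain ⟨m, hm, hmy⟩ := hy
        refine ⟨n * m, mul_ne_zero hn hm, ?_⟩
        have : ((n * m : ℤ) : ℚ) • (x + y) = m • ((n : ℚ) • x) + n • ((m : ℚ) • y) := by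
          rw [← Int.cast_smul_eq_zsmul ℚ m, ← Int.cast_smul_eq_zsmul ℚ n ((m:ℚ) • y)]
          push_cast
          rw [smul_add, smul_smul, smul_smul]
          ring_nf
        rw [this]
        exact M.add_mem (M.smul_mem m hnx) (M.smul_mem n hmy)
    | smul q x _ hx =>
        obtain ⟨n, hn, hnx⟩ := hx
        refine ⟨n * q.den, mul_ne_zero hn (by exact_mod_cast q.den_nz), ?_⟩
        have : ((n * (q.den : ℤ) : ℤ) : ℚ) • (q • x) = q.num • ((n : ℚ) • x) := by
          rw [← Int.cast_smul_eq_zsmul ℚ q.num]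
          rw [smul_smul, smul_smul]
          congr 1
          push_cast
          rw [mul_assoc, mul_comm (q.den : ℚ) q, Rat.mul_den_eq_num]
          ring
        rw [this]
        exact M.smul_mem q.num hnx
  set W : Submodule ℚ V := Submodule.span ℚ (L : Set V) with hW
  set Wp : Submodule ℚ V := B.orthogonal W with hWp
  -- membership in Wp
  have hWp_iff : ∀ z : V, z ∈ Wp ↔ ∀ y ∈ L, B z y = 0 := by
    intro z
    constructor
    · intro hz y hy
      rw [hBsymm]
      exact hz y (Submodule.subset_span hy)
    · intro h n hn
      induction hn using Submodule.span_induction with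
      | mem y hy =>
          show B y z = 0
          rw [← hBsymm]; exact h y hy
      | zero =>
          show B (0 : V) z = 0
          simp
      | add a b _ _ ha hb =>
          have ha' : B a z = 0 := ha
          have hb' : B b z = 0 := hb
          show B (a + b) z = 0
          rw [map_add, LinearMap.add_apply, ha', hb', add_zero]
      | smul q a _ ha =>
          have ha' : B a z = 0 := ha
          show B (q • a) z = 0
          rw [map_smul, LinearMap.smul_apply, ha', smul_zero]
  -- g fixes Wp pointwise
  have hfixWp : ∀ m ∈ Wp, g m = m := by
    intro m hm
    obtain ⟨n, hn, hnm⟩ := key U m (by rw [hUspan]; trivial)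
    have hn' : (n : ℚ) ≠ 0 := Int.cast_ne_zero.mpr hn
    have := hgfix ((n : ℚ) • m) hnm (fun y hy => by
      rw [LinearMap.map_smul, LinearMap.smul_apply, (hWp_iff m).mp hm y hy, smul_zero])
    rw [map_smul] at this
    exact smul_right_injective V hn' this
  have hfixWp' : ∀ m ∈ Wp, g.symm m = m := by
    intro m hm
    conv_lhs => rw [← hfixWp m hm]
    exact g.symm_apply_apply m
  -- g and g.symm preserve W
  have hgW : ∀ x ∈ W, g x ∈ W := by
    intro x hx
    have : g x ∈ B.orthogonal Wp := by
      rw [LinearMap.BilinForm.mem_orthogonal_iff]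
      intro m hm
      have h1 : B (g (g.symm m)) (g x) = B (g.symm m) x := hgisom _ _
      rw [g.apply_symm_apply, hfixWp' m hm] at h1
      have h2 : B x m = 0 := hm x hx
      show B m (g x) = 0
      rw [h1, hBsymm m x, h2]
    rwa [hWp, LinearMap.BilinForm.orthogonal_orthogonal hBnd hrefl] at this
  have hgW' : ∀ x ∈ W, g.symm x ∈ W := by
    intro x hx
    have : g.symm x ∈ B.orthogonal Wp := by
      rw [LinearMap.BilinForm.mem_orthogonal_iff]
      intro m hm
      have h1 : B x m = B (g.symm x) m := by
        have := hgisom (g.symm x) m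
        rwa [g.apply_symm_apply, hfixWp m hm] at this
      show B m (g.symm x) = 0
      rw [hBsymm m (g.symm x), ← h1]
      exact hm x hx
    rwa [hWp, LinearMap.BilinForm.orthogonal_orthogonal hBnd hrefl] at this
  -- U ∩ W = L
  have hUW : ∀ x : V, x ∈ U → x ∈ W → x ∈ L := by
    intro x hxU hxW
    obtain ⟨n, hn, hnx⟩ := key L x hxW
    rw [Int.cast_smul_eq_zsmul ℚ] at hnx
    exact hLprim x hxU n hn hnx
  constructor
  · intro x
    constructor
    · intro hx
      exact hUW (g x) ((hgU x).mp (hLU hx)) (hgW x (Submodule.subset_span hx))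
    · intro hx
      have hxU : x ∈ U := (hgU x).mpr (hLU hx)
      have : g.symm (g x) ∈ W := hgW' (g x) (Submodule.subset_span hx)
      rw [g.symm_apply_apply] at this
      exact hUW x hxU this
  · intro v hvW hv
    refine hUW (g v - v) ?_ (Submodule.sub_mem W (hgW v hvW) hvW)
    refine hUunimodular _ fun u hu => ?_
    -- g.symm u - u ∈ L
    have hsu : g.symm u - u ∈ L := by
      refine hUW _ (Submodule.sub_mem U ((hgU (g.symm u)).mpr (by rwa [g.apply_symm_apply])) hu) ?_
      have : g.symm u - u ∈ B.orthogonal Wp := by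
        rw [LinearMap.BilinForm.mem_orthogonal_iff]
        intro m hm
        have h1 : B u m = B (g.symm u) m := by
          have := hgisom (g.symm u) m
          rwa [g.apply_symm_apply, hfixWp m hm] at this
        show B m (g.symm u - u) = 0
        rw [map_sub, hBsymm m (g.symm u), ← h1, hBsymm u m, sub_self]
      rwa [hWp, LinearMap.BilinForm.orthogonal_orthogonal hBnd hrefl] at this
    obtain ⟨n, hn⟩ := hv (g.symm u - u) hsu
    refine ⟨n, ?_⟩
    have h1 : B (g v) u = B v (g.symm u) := by
      conv_lhs => rw [← g.apply_symm_apply u]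
      exact hgisom _ _
    rw [← hn, map_sub, LinearMap.sub_apply, h1, map_sub]
end

section
/- Let U be an even unimodular lattice and let L ⊆ U be a primitive nondegenerate sublattice with orthogonal complement L^⊥. For every stable isometry g ∈ O(L)* there exists a unique isometry ĝ of U such that ĝ|_L = g and ĝ(x) = x for every x ∈ L^⊥. (This is the other direction of Lemma 2.2: the restriction map induces an isomorphism Γ(L,U) ≅ O(L)*, where Γ(L,U) = {g ∈ O(U) : g|_{L^⊥} = id}.) -/
open Submodule

theorem Submodule.exists_intCast_smul_mem_of_mem_span_rat {V : Type*} [AddCommGroup V]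
    [Module ℚ V] (M : Submodule ℤ V) {w : V} (hw : w ∈ span ℚ (M : Set V)) :
    ∃ n : ℤ, n ≠ 0 ∧ (n : ℚ) • w ∈ M := by
  have smul_mem (k : ℤ) {y : V} (hy : y ∈ M) : (k : ℚ) • y ∈ M := by
    rw [Int.cast_smul_eq_zsmul]
    exact M.smul_mem k hy
  induction hw using span_induction with
  | mem x hx => exact ⟨1, one_ne_zero, by simpa using hx⟩
  | zero => exact ⟨1, one_ne_zero, by simp⟩
  | add x y _ _ hx hy =>
    obtain ⟨n, hn, hnx⟩ := hx
    obtain ⟨m, hm, hmy⟩ := hy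
    refine ⟨n * m, mul_ne_zero hn hm, ?_⟩
    rw [smul_add, Int.cast_mul, mul_comm, mul_smul, mul_comm, mul_smul]
    exact M.add_mem (smul_mem m hnx) (smul_mem n hmy)
  | smul q x _ hx =>
    obtain ⟨n, hn, hnx⟩ := hx
    refine ⟨q.den * n, mul_ne_zero (by exact_mod_cast q.den_ne_zero) hn, ?_⟩
    rw [smul_comm, Int.cast_mul, mul_smul, Int.cast_natCast, smul_smul, Rat.mul_den_eq_num]
    exact smul_mem q.num hnx

theorem Module.finite_of_fg_of_span_rat_eq_top {V : Type*} [AddCommGroup V] [Module ℚ V]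
    {U : Submodule ℤ V} (hU : U.FG) (hUspan : span ℚ (U : Set V) = ⊤) :
    FiniteDimensional ℚ V := by
  obtain ⟨S, rfl⟩ := hU
  exact Module.finite_def.mpr ⟨S, by rwa [span_span_of_tower] at hUspan⟩

namespace LinearEquiv

variable {R E : Type*} [Ring R] [AddCommGroup E] [Module R E] {p q : Submodule R E}

noncomputable def extendOfIsCompl (h : IsCompl p q) (g : p ≃ₗ[R] p) : E ≃ₗ[R] E :=
  (p.prodEquivOfIsCompl q h).symm ≪≫ₗ g.prodCongr (refl R q) ≪≫ₗ p.prodEquivOfIsCompl q h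

variable (h : IsCompl p q) (g : p ≃ₗ[R] p)

@[simp]
theorem extendOfIsCompl_apply_left (u : p) : extendOfIsCompl h g u = (g u : E) := by
  simp [extendOfIsCompl]

@[simp]
theorem extendOfIsCompl_apply_right (v : q) : extendOfIsCompl h g v = (v : E) := by
  simp [extendOfIsCompl]

theorem eq_extendOfIsCompl {f : E ≃ₗ[R] E} (hp : ∀ u : p, f u = g u) (hq : ∀ v : q, f v = v) :
    f = extendOfIsCompl h g := by
  ext x
  obtain ⟨u, v, rfl, -⟩ := existsUnique_add_of_isCompl h x
  simp [hp, hq]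

theorem extendOfIsCompl_symm : (extendOfIsCompl h g).symm = extendOfIsCompl h g.symm :=
  eq_extendOfIsCompl h g.symm (fun u => by simp [symm_apply_eq])
    (fun v => by simp [symm_apply_eq])

end LinearEquiv

open LinearEquiv

namespace LinearMap.BilinForm

section Field

variable {K V : Type*} [Field K] [AddCommGroup V] [Module K V] {B : LinearMap.BilinForm K V}

theorem mem_orthogonal_span_iff {s : Set V} {x : V} :
    x ∈ B.orthogonal (span K s) ↔ ∀ y ∈ s, B y x = 0 :=
  ⟨fun h y hy => h y (subset_span hy), fun h _ hy => (span_le (p := ker (B.flip x))).mpr h hy⟩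

theorem extendOfIsCompl_isometry (hB : B.IsRefl) {W : Submodule K V}
    (h : IsCompl W (B.orthogonal W)) {g : W ≃ₗ[K] W} (hg : ∀ x y : W, B (g x) (g y) = B x y)
    (x y : V) : B (extendOfIsCompl h g x) (extendOfIsCompl h g y) = B x y := by
  obtain ⟨u, v, rfl, -⟩ := existsUnique_add_of_isCompl h x
  obtain ⟨u', v', rfl, -⟩ := existsUnique_add_of_isCompl h y
  have orth (a : W) (b : B.orthogonal W) : B a b = 0 := b.2 a a.2
  have orth' (a : W) (b : B.orthogonal W) : B b a = 0 := hB _ _ (orth a b)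
  simp [hg, orth, orth']

end Field

variable {V : Type*} [AddCommGroup V] [Module ℚ V] {B : LinearMap.BilinForm ℚ V}
  {L : Submodule ℤ V}

theorem restrict_span_rat_nondegenerate (hB : B.IsRefl)
    (hL : ∀ x ∈ L, (∀ y ∈ L, B x y = 0) → x = 0) :
    (B.restrict (span ℚ (L : Set V))).Nondegenerate := by
  refine (IsRefl.nondegenerate_iff_separatingLeft (B := B.restrict _) fun x y => hB x y).mpr ?_
  rintro ⟨w, hw⟩ hw0
  obtain ⟨n, hn, hnw⟩ := exists_intCast_smul_mem_of_mem_span_rat L hw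
  have hnw0 : (n : ℚ) • w = 0 :=
    hL _ hnw fun y hy => by simp [show B w y = 0 from hw0 ⟨y, subset_span hy⟩]
  ext
  exact (smul_eq_zero.mp hnw0).resolve_left (by exact_mod_cast hn)

def ActsTriviallyOnDiscriminant (B : LinearMap.BilinForm ℚ V) (L : Submodule ℤ V)
    (g : span ℚ (L : Set V) ≃ₗ[ℚ] span ℚ (L : Set V)) : Prop :=
  ∀ v : span ℚ (L : Set V), InDual B L v → (g v : V) - v ∈ L

theorem ActsTriviallyOnDiscriminant.symm {g : span ℚ (L : Set V) ≃ₗ[ℚ] span ℚ (L : Set V)}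
    (hgisom : ∀ x y, B (g x : V) (g y) = B x y)
    (hgL : ∀ (x : V) (hx : x ∈ L), (g ⟨x, subset_span hx⟩ : V) ∈ L)
    (hg : ActsTriviallyOnDiscriminant B L g) : ActsTriviallyOnDiscriminant B L g.symm := by
  intro v hv
  have hdual : InDual B L (g.symm v : V) := fun y hy => by
    simpa [← hgisom (g.symm v) ⟨y, subset_span hy⟩] using hv _ (hgL y hy)
  simpa using L.neg_mem (hg _ hdual)

theorem extendOfIsCompl_sub_mem (hB : B.IsRefl)
    (h : IsCompl (span ℚ (L : Set V)) (B.orthogonal (span ℚ (L : Set V))))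
    {g : span ℚ (L : Set V) ≃ₗ[ℚ] span ℚ (L : Set V)} (hg : ActsTriviallyOnDiscriminant B L g)
    {x : V} (hx : InDual B L x) : extendOfIsCompl h g x - x ∈ L := by
  obtain ⟨w, c, rfl, -⟩ := existsUnique_add_of_isCompl h x
  have hc (y : V) (hy : y ∈ L) : B c y = 0 := hB _ _ (c.2 y (subset_span hy))
  have hw : InDual B L w := fun y hy => by simpa [hc y hy] using hx y hy
  simpa using hg w hw

theorem extendOfIsCompl_mem_iff {U : Submodule ℤ V} (hLU : L ≤ U)
    (hU : ∀ x ∈ U, InDual B L x) (hB : B.IsRefl)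
    (h : IsCompl (span ℚ (L : Set V)) (B.orthogonal (span ℚ (L : Set V))))
    {g : span ℚ (L : Set V) ≃ₗ[ℚ] span ℚ (L : Set V)} (hgisom : ∀ x y, B (g x : V) (g y) = B x y)
    (hgL : ∀ (x : V) (hx : x ∈ L), (g ⟨x, subset_span hx⟩ : V) ∈ L)
    (hg : ActsTriviallyOnDiscriminant B L g) (x : V) :
    x ∈ U ↔ extendOfIsCompl h g x ∈ U := by
  have mapsTo {f} (hf : ActsTriviallyOnDiscriminant B L f) {y : V} (hy : y ∈ U) :
      extendOfIsCompl h f y ∈ U := by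
    simpa using U.add_mem hy (hLU (extendOfIsCompl_sub_mem hB h hf (hU y hy)))
  refine ⟨mapsTo hg, fun hx => ?_⟩
  simpa [← extendOfIsCompl_symm] using mapsTo (hg.symm hgisom hgL) hx

theorem apply_eq_self_of_mem_orthogonal_span {U : Submodule ℤ V} (hB : B.IsRefl)
    (hUspan : span ℚ (U : Set V) = ⊤) {f : V →ₗ[ℚ] V}
    (hf : ∀ x ∈ U, (∀ y ∈ L, B x y = 0) → f x = x) {c : V}
    (hc : c ∈ B.orthogonal (span ℚ (L : Set V))) : f c = c := by
  obtain ⟨n, hn, hnc⟩ := exists_intCast_smul_mem_of_mem_span_rat U (hUspan ▸ mem_top (x := c))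
  have hperp : ∀ y ∈ L, B ((n : ℚ) • c) y = 0 := fun y hy => by
    simp [hB _ _ (hc y (subset_span hy))]
  have hn' : (n : ℚ) ≠ 0 := by exact_mod_cast hn
  exact smul_right_injective V hn' (by simpa using hf _ hnc hperp)

end LinearMap.BilinForm

open LinearMap.BilinForm

theorem stable_isometry_extends_uniquely_general
    {V : Type*} [AddCommGroup V] [Module ℚ V]
    (B : LinearMap.BilinForm ℚ V)
    (hBsymm : ∀ x y : V, B x y = B y x)
    (U L : Submodule ℤ V)
    -- `U` is an even unimodular lattice:
    (hUfg : U.FG) (hUspan : Submodule.span ℚ (U : Set V) = ⊤)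
    (hUint : ∀ x ∈ U, ∀ y ∈ U, ∃ n : ℤ, B x y = (n : ℚ))
    -- `L` is a primitive nondegenerate sublattice of `U`:
    (hLU : L ≤ U)
    (hLnd : ∀ x ∈ L, (∀ y ∈ L, B x y = 0) → x = 0)
    -- `g` is a stable isometry of `L`, given on `L ⊗ ℚ = spanℚ L`:
    (g : ↥(Submodule.span ℚ (L : Set V)) ≃ₗ[ℚ] ↥(Submodule.span ℚ (L : Set V)))
    (hgisom : ∀ x y : ↥(Submodule.span ℚ (L : Set V)),
      B ((g x : V)) ((g y : V)) = B (x : V) (y : V))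
    (hgL : ∀ (x : V) (hx : x ∈ L), (g ⟨x, Submodule.subset_span hx⟩ : V) ∈ L)
    (hgstable : ∀ v : ↥(Submodule.span ℚ (L : Set V)),
      InDual B L (v : V) → (g v : V) - (v : V) ∈ L) :
    ∃! ghat : V ≃ₗ[ℚ] V,
      (∀ x y : V, B (ghat x) (ghat y) = B x y) ∧
      (∀ x : V, x ∈ U ↔ ghat x ∈ U) ∧
      (∀ (x : V) (hx : x ∈ L), ghat x = (g ⟨x, Submodule.subset_span hx⟩ : V)) ∧
      (∀ x ∈ U, (∀ y ∈ L, B x y = 0) → ghat x = x) := by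
  have hB : B.IsRefl := fun x y hxy => (hBsymm y x).trans hxy
  have := Module.finite_of_fg_of_span_rat_eq_top hUfg hUspan
  have h := B.isCompl_orthogonal_of_restrict_nondegenerate hB
    (restrict_span_rat_nondegenerate hB hLnd)
  have hLdual : ∀ x ∈ U, InDual B L x := fun x hx y hy => hUint x hx y (hLU hy)
  have hextL : ∀ (x : V) (hx : x ∈ L), extendOfIsCompl h g x = g ⟨x, subset_span hx⟩ :=
    fun x hx => extendOfIsCompl_apply_left h g ⟨x, subset_span hx⟩
  refine ⟨extendOfIsCompl h g, ⟨extendOfIsCompl_isometry hB h hgisom,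
    extendOfIsCompl_mem_iff hLU hLdual hB h hgisom hgL hgstable, hextL,
    fun x _ hx => extendOfIsCompl_apply_right h g
      ⟨x, mem_orthogonal_span_iff.mpr fun y hy => hB _ _ (hx y hy)⟩⟩, ?_⟩
  rintro f ⟨-, -, hfL, hfperp⟩
  have hagree : Set.EqOn f (extendOfIsCompl h g) L := fun x hx => (hfL x hx).trans (hextL x hx).symm
  refine eq_extendOfIsCompl h g (fun u => ?_) (fun v =>
    apply_eq_self_of_mem_orthogonal_span hB hUspan (f := f.toLinearMap) hfperp v.2)
  simpa using LinearMap.eqOn_span' (f := f.toLinearMap) (g := (extendOfIsCompl h g).toLinearMap)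
    hagree u.2

/-- Let `U` be an even unimodular lattice and `L ⊆ U` a primitive
nondegenerate sublattice.  Every stable isometry `g ∈ O(L)*` (given here as an isometry of
`L ⊗ ℚ = spanℚ L` preserving `L` and acting trivially on the discriminant group) extends
uniquely to an isometry `ĝ` of `U` with `ĝ|_L = g` and `ĝ x = x` for all `x ∈ L^⊥`. -/
theorem stable_isometry_extends_uniquely
    {V : Type*} [AddCommGroup V] [Module ℚ V]
    (B : LinearMap.BilinForm ℚ V)
    (hBsymm : ∀ x y : V, B x y = B y x) (hBnd : B.Nondegenerate)
    (U L : Submodule ℤ V)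
    -- `U` is an even unimodular lattice:
    (hUfg : U.FG) (hUspan : Submodule.span ℚ (U : Set V) = ⊤)
    (hUint : ∀ x ∈ U, ∀ y ∈ U, ∃ n : ℤ, B x y = (n : ℚ))
    (hUeven : ∀ x ∈ U, ∃ n : ℤ, B x x = 2 * (n : ℚ))
    (hUunimodular : ∀ v : V, InDual B U v → v ∈ U)
    -- `L` is a primitive nondegenerate sublattice of `U`:
    (hLU : L ≤ U)
    (hLprim : ∀ x ∈ U, ∀ n : ℤ, n ≠ 0 → n • x ∈ L → x ∈ L)
    (hLnd : ∀ x ∈ L, (∀ y ∈ L, B x y = 0) → x = 0)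
    -- `g` is a stable isometry of `L`, given on `L ⊗ ℚ = spanℚ L`:
    (g : ↥(Submodule.span ℚ (L : Set V)) ≃ₗ[ℚ] ↥(Submodule.span ℚ (L : Set V)))
    (hgisom : ∀ x y : ↥(Submodule.span ℚ (L : Set V)),
      B ((g x : V)) ((g y : V)) = B (x : V) (y : V))
    (hgL : ∀ (x : V) (hx : x ∈ L), (g ⟨x, Submodule.subset_span hx⟩ : V) ∈ L)
    (hgLsymm : ∀ (x : V) (hx : x ∈ L), (g.symm ⟨x, Submodule.subset_span hx⟩ : V) ∈ L)
    (hgstable : ∀ v : ↥(Submodule.span ℚ (L : Set V)),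
      InDual B L (v : V) → (g v : V) - (v : V) ∈ L) :
    ∃! ghat : V ≃ₗ[ℚ] V,
      (∀ x y : V, B (ghat x) (ghat y) = B x y) ∧
      (∀ x : V, x ∈ U ↔ ghat x ∈ U) ∧
      (∀ (x : V) (hx : x ∈ L), ghat x = (g ⟨x, Submodule.subset_span hx⟩ : V)) ∧
      (∀ x ∈ U, (∀ y ∈ L, B x y = 0) → ghat x = x) :=
  stable_isometry_extends_uniquely_general B hBsymm U L hUfg hUspan hUint hLU hLnd g hgisom hgL
    hgstable
end

section
/- Let N be an even lattice and let L ⊆ N be a sublattice on which the form of N restricts to a nondegenerate form (the inclusion need not be primitive and need not have torsion-free quotient). For g ∈ O(L)*, let ĝ : N ⊗ ℚ → N ⊗ ℚ be the ℚ-linear isometry equal to g ⊗ ℚ on L ⊗ ℚ and equal to the identity on the orthogonal complement of L ⊗ ℚ in N ⊗ ℚ. Then ĝ(N) = N and the restriction ĝ|_N lies in O(N)*; moreover the assignment g ↦ ĝ|_N is an injective group homomorphism O(L)* → O(N)*. (Proposition 2.3: any inclusion of lattices L ↪ N induces a natural injection O(L)* ↪ O(N)* by extension by 1.) -/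
/-- `g` is the extension by `1` of a stable isometry of `L`: it is an isometry of the
ambient rational quadratic space, it preserves `L`, it acts trivially on the discriminant
group of `L`, and it is the identity on the orthogonal complement of `L ⊗ ℚ`. -/
def IsExtensionByOneOfStable {V : Type*} [AddCommGroup V] [Module ℚ V]
    (B : LinearMap.BilinForm ℚ V) (L : Submodule ℤ V) (g : V ≃ₗ[ℚ] V) : Prop :=
  (∀ x y : V, B (g x) (g y) = B x y) ∧
  (∀ x : V, x ∈ L ↔ g x ∈ L) ∧
  (∀ v : V, v ∈ Submodule.span ℚ (L : Set V) → InDual B L v → g v - v ∈ L) ∧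
  (∀ v : V, (∀ y ∈ L, B v y = 0) → g v = v)

/-!
The rational span `W` of `L` is nondegenerate, so `V = W ⊕ W^⊥`. Writing `v = w + u` with
`w ∈ W` and `u ⊥ L`, an extension by one fixes `u`, hence `g v - v = g w - w`; if `v` pairs
integrally with `L` then so does `w`, which therefore lies in `L^∨`, and `g w - w ∈ L` by
stability. Every `v ∈ N` or `v ∈ N^∨` pairs integrally with `L ⊆ N`, so `g v - v ∈ L ⊆ N`:
`g` maps `N` into `N` and acts trivially on `N^∨ / N`. Conversely, if `g x ∈ N` then `x` pairs
integrally with `L = g⁻¹ L`, so `x ∈ N`. Injectivity holds because `N` spans `V`.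
-/
section

open Submodule

variable {V : Type*} [AddCommGroup V] [Module ℚ V]

theorem Submodule.exists_int_smul_mem_of_mem_span_rat (L : Submodule ℤ V) {w : V}
    (hw : w ∈ span ℚ (L : Set V)) : ∃ n : ℤ, n ≠ 0 ∧ n • w ∈ L := by
  obtain ⟨⟨n, hn⟩, hnw⟩ :=
    multiple_mem_span_of_mem_localization_span (nonZeroDivisors ℤ) ℚ (L : Set V) w hw
  rw [span_eq] at hnw
  exact ⟨n, nonZeroDivisors.ne_zero hn, hnw⟩

theorem Module.finite_of_fg_of_span_rat_eq_top_s2 {N : Submodule ℤ V} (hN : N.FG)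
    (hspan : span ℚ (N : Set V) = ⊤) : Module.Finite ℚ V := by
  obtain ⟨s, hs⟩ := hN
  exact Module.finite_def.mpr ⟨s, by rw [← hspan, ← hs, span_span_of_tower]⟩

variable {B : LinearMap.BilinForm ℚ V} {L N : Submodule ℤ V} {g : V ≃ₗ[ℚ] V} {v : V}

theorem InDual.mono (hv : InDual B N v) (hLN : L ≤ N) : InDual B L v :=
  fun y hy => hv y (hLN hy)

theorem InDual.map (hv : InDual B L v) (hiso : ∀ x y, B (g x) (g y) = B x y)
    (hL : ∀ y ∈ L, g.symm y ∈ L) : InDual B L (g v) := by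
  intro y hy
  obtain ⟨n, hn⟩ := hv _ (hL y hy)
  exact ⟨n, by rw [← hiso, g.apply_symm_apply] at hn; exact hn⟩

theorem disjoint_span_orthogonal (hB : B.IsRefl)
    (hL : ∀ x ∈ L, (∀ y ∈ L, B x y = 0) → x = 0) :
    Disjoint (span ℚ (L : Set V)) (B.orthogonal (span ℚ (L : Set V))) := by
  rw [disjoint_iff_inf_le]
  rintro w ⟨hw, hwperp⟩
  obtain ⟨n, hn, hnw⟩ := L.exists_int_smul_mem_of_mem_span_rat hw
  have hperp : ∀ y ∈ L, B (n • w) y = 0 := fun y hy => by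
    rw [map_zsmul, LinearMap.smul_apply, hB _ _ (hwperp y (subset_span hy)), smul_zero]
  have hnw0 := hL _ hnw hperp
  rw [← Int.cast_smul_eq_zsmul ℚ, smul_eq_zero] at hnw0
  exact (mem_bot ℚ).mpr (hnw0.resolve_left (Int.cast_ne_zero.mpr hn))

theorem isCompl_span_orthogonal [FiniteDimensional ℚ V] (hB : B.IsRefl)
    (hL : ∀ x ∈ L, (∀ y ∈ L, B x y = 0) → x = 0) :
    IsCompl (span ℚ (L : Set V)) (B.orthogonal (span ℚ (L : Set V))) :=
  (B.isCompl_orthogonal_iff_disjoint hB).mpr (disjoint_span_orthogonal hB hL)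

namespace IsExtensionByOneOfStable

theorem sub_mem_of_inDual (hg : IsExtensionByOneOfStable B L g) (hB : B.IsRefl)
    (hsup : span ℚ (L : Set V) ⊔ B.orthogonal (span ℚ (L : Set V)) = ⊤)
    (hv : InDual B L v) : g v - v ∈ L := by
  obtain ⟨w, hw, u, hu, rfl⟩ := mem_sup.mp (hsup ▸ mem_top : v ∈ _)
  have hu : ∀ y ∈ L, B u y = 0 := fun y hy => hB _ _ (hu y (subset_span hy))
  have hwdual : InDual B L w := fun y hy => by
    simpa [hu y hy] using hv y hy
  rw [map_add, hg.2.2.2 u hu, add_sub_add_right_eq_sub]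
  exact hg.2.2.1 w hw hwdual

theorem mul {g₁ g₂ : V ≃ₗ[ℚ] V} (h₁ : IsExtensionByOneOfStable B L g₁)
    (h₂ : IsExtensionByOneOfStable B L g₂) : IsExtensionByOneOfStable B L (g₁ * g₂) := by
  obtain ⟨hiso₁, hmem₁, hstab₁, hfix₁⟩ := h₁
  obtain ⟨hiso₂, hmem₂, hstab₂, hfix₂⟩ := h₂
  refine ⟨fun x y => (hiso₁ _ _).trans (hiso₂ x y), fun x => (hmem₂ x).trans (hmem₁ _),
    fun v hvW hv => ?_, fun v hv => by simp [LinearEquiv.mul_apply, hfix₂ v hv, hfix₁ v hv]⟩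
  have h₂v := hstab₂ v hvW hv
  have hg₂vW : g₂ v ∈ span ℚ (L : Set V) := by
    simpa using add_mem hvW (subset_span h₂v)
  have hg₂v : InDual B L (g₂ v) :=
    hv.map hiso₂ fun y hy => (hmem₂ _).mpr (by rwa [g₂.apply_symm_apply])
  simpa [LinearEquiv.mul_apply] using add_mem (hstab₁ _ hg₂vW hg₂v) h₂v

theorem mem_iff_apply_mem (hg : IsExtensionByOneOfStable B L g) (hB : B.IsRefl)
    (hsup : span ℚ (L : Set V) ⊔ B.orthogonal (span ℚ (L : Set V)) = ⊤) (hLN : L ≤ N)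
    (hN : ∀ x ∈ N, InDual B N x) (x : V) : x ∈ N ↔ g x ∈ N := by
  constructor
  · intro hx
    have hgx := hLN (hg.sub_mem_of_inDual hB hsup ((hN x hx).mono hLN))
    simpa using add_mem hx hgx
  · intro hgx
    have hx : InDual B L x := fun y hy => by
      rw [← hg.1 x y]
      exact hN _ hgx _ (hLN ((hg.2.1 y).mp hy))
    simpa using sub_mem hgx (hLN (hg.sub_mem_of_inDual hB hsup hx))

end IsExtensionByOneOfStable

end

theorem extension_by_one_injects_stable_groups_general
    {V : Type*} [AddCommGroup V] [Module ℚ V]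
    (B : LinearMap.BilinForm ℚ V)
    (hBsymm : ∀ x y : V, B x y = B y x)
    (N L : Submodule ℤ V)
    -- `N` is an even lattice:
    (hNfg : N.FG) (hNspan : Submodule.span ℚ (N : Set V) = ⊤)
    (hNint : ∀ x ∈ N, ∀ y ∈ N, ∃ n : ℤ, B x y = (n : ℚ))
    -- `L` is a sublattice on which the form is nondegenerate:
    (hLN : L ≤ N)
    (hLnd : ∀ x ∈ L, (∀ y ∈ L, B x y = 0) → x = 0) :
    -- the extension by one of any stable isometry of `L` preserves `N` and is stable on `N`:
    (∀ g : V ≃ₗ[ℚ] V, IsExtensionByOneOfStable B L g →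
      (∀ x : V, x ∈ N ↔ g x ∈ N) ∧
      (∀ v : V, v ∈ Submodule.span ℚ (N : Set V) → InDual B N v → g v - v ∈ N)) ∧
    -- the assignment is a group homomorphism:
    (∀ g₁ g₂ : V ≃ₗ[ℚ] V, IsExtensionByOneOfStable B L g₁ → IsExtensionByOneOfStable B L g₂ →
      IsExtensionByOneOfStable B L (g₁ * g₂)) ∧
    -- and it is injective: two extensions agreeing on `N` coincide:
    (∀ g₁ g₂ : V ≃ₗ[ℚ] V, IsExtensionByOneOfStable B L g₁ → IsExtensionByOneOfStable B L g₂ →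
      (∀ x ∈ N, g₁ x = g₂ x) → g₁ = g₂) := by
  have : FiniteDimensional ℚ V := Module.finite_of_fg_of_span_rat_eq_top_s2 hNfg hNspan
  have hB : B.IsRefl := fun x y h => (hBsymm y x).trans h
  have hsup := (isCompl_span_orthogonal hB hLnd).sup_eq_top
  refine ⟨fun g hg => ⟨fun x => ?_, fun v _ hv => ?_⟩, fun _ _ => IsExtensionByOneOfStable.mul,
    fun g₁ g₂ _ _ h => LinearEquiv.toLinearMap_injective (LinearMap.ext_on hNspan h)⟩
  · exact hg.mem_iff_apply_mem hB hsup hLN hNint x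
  · exact hLN (hg.sub_mem_of_inDual hB hsup (hv.mono hLN))

/-- Let `N` be an even lattice (here a full lattice in the rational
quadratic space `(V, B)`) and `L ⊆ N` a sublattice on which the form is nondegenerate
(not necessarily primitive).  For `g ∈ O(L)*`, the extension `ĝ` of `g` by the identity on
the orthogonal complement of `L ⊗ ℚ` in `N ⊗ ℚ` satisfies `ĝ (N) = N` and `ĝ|_N ∈ O(N)*`;
moreover the assignment `g ↦ ĝ|_N` is an injective group homomorphism `O(L)* → O(N)*`. -/
theorem extension_by_one_injects_stable_groups
    {V : Type*} [AddCommGroup V] [Module ℚ V]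
    (B : LinearMap.BilinForm ℚ V)
    (hBsymm : ∀ x y : V, B x y = B y x) (hBnd : B.Nondegenerate)
    (N L : Submodule ℤ V)
    -- `N` is an even lattice:
    (hNfg : N.FG) (hNspan : Submodule.span ℚ (N : Set V) = ⊤)
    (hNint : ∀ x ∈ N, ∀ y ∈ N, ∃ n : ℤ, B x y = (n : ℚ))
    (hNeven : ∀ x ∈ N, ∃ n : ℤ, B x x = 2 * (n : ℚ))
    -- `L` is a sublattice on which the form is nondegenerate:
    (hLN : L ≤ N)
    (hLnd : ∀ x ∈ L, (∀ y ∈ L, B x y = 0) → x = 0) :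
    -- the extension by one of any stable isometry of `L` preserves `N` and is stable on `N`:
    (∀ g : V ≃ₗ[ℚ] V, IsExtensionByOneOfStable B L g →
      (∀ x : V, x ∈ N ↔ g x ∈ N) ∧
      (∀ v : V, v ∈ Submodule.span ℚ (N : Set V) → InDual B N v → g v - v ∈ N)) ∧
    -- the assignment is a group homomorphism:
    (∀ g₁ g₂ : V ≃ₗ[ℚ] V, IsExtensionByOneOfStable B L g₁ → IsExtensionByOneOfStable B L g₂ →
      IsExtensionByOneOfStable B L (g₁ * g₂)) ∧
    -- and it is injective: two extensions agreeing on `N` coincide: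
    (∀ g₁ g₂ : V ≃ₗ[ℚ] V, IsExtensionByOneOfStable B L g₁ → IsExtensionByOneOfStable B L g₂ →
      (∀ x ∈ N, g₁ x = g₂ x) → g₁ = g₂) :=
  extension_by_one_injects_stable_groups_general B hBsymm N L hNfg hNspan hNint hLN hLnd
end

section
/- Let S be an even lattice, let T ⊆ S be a primitive sublattice on which the form is nondegenerate, and let K = T^⊥ = {s ∈ S : B(s,t) = 0 for all t ∈ T}. If g ∈ O(S)* is a stable isometry of S such that g(x) = x for every x ∈ K, then g(T) = T and the restriction g|_T lies in O(T)*. (This identifies the kernel of the natural map {g ∈ O(S)* : g(T) = T} → O(K) with O(T)*, the key step in the proof of Proposition 4.2.) -/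
/-- Clearing denominators: an element of the ℚ-span of a ℤ-submodule has a nonzero
integer multiple inside the submodule. -/
private lemma exists_int_smul_mem {V : Type*} [AddCommGroup V] [Module ℚ V]
    (M : Submodule ℤ V) {v : V} (hv : v ∈ Submodule.span ℚ (M : Set V)) :
    ∃ n : ℤ, n ≠ 0 ∧ n • v ∈ M := by
  induction hv using Submodule.span_induction with
  | mem x hx => exact ⟨1, one_ne_zero, by simpa using hx⟩
  | zero => exact ⟨1, one_ne_zero, by simp⟩
  | add x y hx' hy' hx hy =>
    obtain ⟨n, hn0, hn⟩ := hx
    obtain ⟨m, hm0, hm⟩ := hy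
    refine ⟨n * m, mul_ne_zero hn0 hm0, ?_⟩
    have h : (n * m) • (x + y) = m • (n • x) + n • (m • y) := by
      rw [smul_add, mul_comm n m, mul_smul, mul_comm m n, mul_smul]
    rw [h]
    exact M.add_mem (M.smul_mem _ hn) (M.smul_mem _ hm)
  | smul q x hx' hx =>
    obtain ⟨n, hn0, hn⟩ := hx
    refine ⟨(q.den : ℤ) * n, mul_ne_zero (Int.natCast_ne_zero.mpr q.den_nz) hn0, ?_⟩
    have key : ((q.den : ℤ) * n) • (q • x) = (q.num * n) • x := by
      rw [← Int.cast_smul_eq_zsmul ℚ ((q.den : ℤ) * n),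
        ← Int.cast_smul_eq_zsmul ℚ (q.num * n), smul_smul]
      congr 1
      have hden : ((q.den : ℚ)) * q = (q.num : ℚ) := by
        have hd : ((q.den : ℚ)) ≠ 0 := by exact_mod_cast q.den_nz
        rw [mul_comm]
        exact (eq_div_iff hd).mp (Rat.num_div_den q).symm
      push_cast
      rw [mul_comm ((q.den : ℚ)) ((n : ℚ)), mul_assoc, hden, mul_comm]
    rw [key, mul_smul]
    exact M.smul_mem _ hn

/-- Let `S` be an even lattice, `T ⊆ S` a primitive sublattice on which
the form is nondegenerate, and `K = T^⊥ = {s ∈ S : B s t = 0 for all t ∈ T}`.  If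
`g ∈ O(S)*` is a stable isometry of `S` fixing `K` pointwise, then `g (T) = T` and the
restriction `g|_T` lies in `O(T)*`. -/
theorem kernel_of_restriction_to_complement_is_stable
    {V : Type*} [AddCommGroup V] [Module ℚ V]
    (B : LinearMap.BilinForm ℚ V)
    (hBsymm : ∀ x y : V, B x y = B y x) (hBnd : B.Nondegenerate)
    (S T : Submodule ℤ V)
    -- `S` is an even lattice:
    (hSfg : S.FG) (hSspan : Submodule.span ℚ (S : Set V) = ⊤)
    (hSint : ∀ x ∈ S, ∀ y ∈ S, ∃ n : ℤ, B x y = (n : ℚ))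
    (hSeven : ∀ x ∈ S, ∃ n : ℤ, B x x = 2 * (n : ℚ))
    -- `T` is a primitive sublattice of `S` on which the form is nondegenerate:
    (hTS : T ≤ S)
    (hTprim : ∀ x ∈ S, ∀ n : ℤ, n ≠ 0 → n • x ∈ T → x ∈ T)
    (hTnd : ∀ x ∈ T, (∀ y ∈ T, B x y = 0) → x = 0)
    -- `g` is a stable isometry of `S` fixing `K = T^⊥` pointwise:
    (g : V ≃ₗ[ℚ] V)
    (hgisom : ∀ x y : V, B (g x) (g y) = B x y)
    (hgS : ∀ x : V, x ∈ S ↔ g x ∈ S)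
    (hgstabS : ∀ v : V, InDual B S v → g v - v ∈ S)
    (hgfixK : ∀ x ∈ S, (∀ t ∈ T, B x t = 0) → g x = x) :
    (∀ x : V, x ∈ T ↔ g x ∈ T) ∧
      ∀ v : V, v ∈ Submodule.span ℚ (T : Set V) → InDual B T v → g v - v ∈ T := by
  classical
  have hsmul_cast : ∀ (n : ℤ) (x : V), n • x = (n : ℚ) • x :=
    fun n x => (Int.cast_smul_eq_zsmul ℚ n x).symm
  have hzsmul_cancel : ∀ (n : ℤ), n ≠ 0 → ∀ x : V, n • x = 0 → x = 0 := by
    intro n hn x hx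
    rw [hsmul_cast] at hx
    exact (smul_eq_zero.mp hx).resolve_left (by exact_mod_cast hn)
  -- V is finite dimensional over ℚ
  haveI : FiniteDimensional ℚ V := by
    obtain ⟨s, hs⟩ := hSfg
    have hsub : (S : Set V) ⊆ (Submodule.span ℚ (s : Set V) : Set V) := by
      intro x hx
      rw [← hs] at hx
      exact Submodule.span_subset_span ℤ ℚ (s : Set V) hx
    have htop : Submodule.span ℚ (s : Set V) = ⊤ := by
      refine le_antisymm le_top ?_
      rw [← hSspan]
      exact Submodule.span_le.mpr hsub
    haveI := FiniteDimensional.span_of_finite ℚ s.finite_toSet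
    exact Module.Finite.equiv (LinearEquiv.ofTop _ htop)
  set Tℚ : Submodule ℚ V := Submodule.span ℚ (T : Set V) with hTQ
  have hTcl : ∀ x : V, x ∈ Tℚ → x ∈ S → x ∈ T := by
    intro x hx hxS
    obtain ⟨n, hn0, hn⟩ := exists_int_smul_mem T hx
    exact hTprim x hxS n hn0 hn
  have hrefl : B.IsRefl := fun x y h => by rw [hBsymm]; exact h
  have hTQnd : (B.restrict Tℚ).Nondegenerate := by
    refine LinearMap.BilinForm.Nondegenerate.ofSeparatingLeft ?_
    rintro ⟨x, hx⟩ h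
    obtain ⟨n, hn0, hn⟩ := exists_int_smul_mem T hx
    have hx0 : x = 0 := by
      refine hzsmul_cancel n hn0 x (hTnd _ hn ?_)
      intro y hy
      have h2 := h ⟨y, Submodule.subset_span hy⟩
      simp only [LinearMap.BilinForm.restrict_apply, LinearMap.domRestrict_apply] at h2
      rw [hsmul_cast, map_smul, LinearMap.smul_apply, h2, smul_zero]
    exact Subtype.ext hx0
  set Kℚ : Submodule ℚ V := B.orthogonal Tℚ with hKQ
  have hcompl : IsCompl Tℚ Kℚ :=
    LinearMap.BilinForm.isCompl_orthogonal_of_restrict_nondegenerate hrefl hTQnd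
  have hmemK : ∀ k ∈ Kℚ, ∀ t ∈ Tℚ, B t k = 0 := by
    intro k hk t ht
    exact (LinearMap.BilinForm.mem_orthogonal_iff.mp hk) t ht
  have hKperp : ∀ z : V, (∀ k ∈ Kℚ, B z k = 0) → z ∈ Tℚ := by
    intro z hz
    have hztop : z ∈ Tℚ ⊔ Kℚ := by rw [hcompl.sup_eq_top]; trivial
    obtain ⟨t, ht, k, hk, htk⟩ := Submodule.mem_sup.mp hztop
    have hk0 : k = 0 := by
      apply hBnd.1
      intro u
      have hutop : u ∈ Tℚ ⊔ Kℚ := by rw [hcompl.sup_eq_top]; trivial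
      obtain ⟨t', ht', k', hk', htk'⟩ := Submodule.mem_sup.mp hutop
      have h1 : B k t' = 0 := hBsymm k t' ▸ (hmemK k hk t' ht')
      have h2 : B k k' = 0 := by
        have hzk' : B z k' = 0 := hz k' hk'
        have htk'0 : B t k' = 0 := hmemK k' hk' t ht
        have h3 : B (t + k) k' = 0 := by rw [htk]; exact hzk'
        rw [map_add, LinearMap.add_apply, htk'0, zero_add] at h3
        exact h3
      rw [← htk', map_add, h1, h2, add_zero]
    rw [← htk, hk0, add_zero]
    exact ht
  have hfixKQ : ∀ k ∈ Kℚ, g k = k := by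
    intro k hk
    have hkspan : k ∈ Submodule.span ℚ (S : Set V) := by rw [hSspan]; trivial
    obtain ⟨n, hn0, hn⟩ := exists_int_smul_mem S hkspan
    have hperp : ∀ t ∈ T, B (n • k) t = 0 := by
      intro t ht
      have h0 : B k t = 0 := hBsymm k t ▸ hmemK k hk t (Submodule.subset_span ht)
      rw [hsmul_cast, map_smul, LinearMap.smul_apply, h0, smul_zero]
    have hfix := hgfixK (n • k) hn hperp
    rw [map_zsmul] at hfix
    have h8 : n • (g k - k) = 0 := by rw [smul_sub, hfix, sub_self]
    exact sub_eq_zero.mp (hzsmul_cancel n hn0 _ h8)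
  have hmain1 : ∀ x : V, x ∈ T ↔ g x ∈ T := by
    intro x
    constructor
    · intro hx
      refine hTcl _ ?_ ((hgS x).mp (hTS hx))
      apply hKperp
      intro k hk
      rw [← hfixKQ k hk, hgisom]
      exact hBsymm x k ▸ hmemK k hk x (Submodule.subset_span hx)
    · intro hgx
      refine hTcl _ ?_ ((hgS x).mpr (hTS hgx))
      apply hKperp
      intro k hk
      have h4 : B (g x) (g k) = B x k := hgisom x k
      rw [hfixKQ k hk] at h4
      rw [← h4]
      exact hBsymm (g x) k ▸ hmemK k hk (g x) (Submodule.subset_span hgx)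
  refine ⟨hmain1, ?_⟩
  intro v hv hvd
  haveI hVnz : NoZeroSMulDivisors ℤ V :=
    ⟨fun {n} {x} h => by
      by_cases hn : n = 0
      · exact Or.inl hn
      · exact Or.inr (hzsmul_cancel n hn x h)⟩
  haveI : Module.Finite ℤ S := Module.Finite.iff_fg.mpr hSfg
  set T' : Submodule ℤ S := T.comap S.subtype with hT'
  haveI : Module.Finite ℤ (S ⧸ T') :=
    Module.Finite.of_surjective T'.mkQ T'.mkQ_surjective
  haveI : NoZeroSMulDivisors ℤ (S ⧸ T') := by
    refine ⟨fun {n} {x} h => ?_⟩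
    by_cases hn : n = 0
    · exact Or.inl hn
    refine Or.inr ?_
    obtain ⟨s, rfl⟩ := T'.mkQ_surjective x
    rw [← map_zsmul, ← LinearMap.mem_ker, Submodule.ker_mkQ] at h
    have hmem : ((n • s : S) : V) ∈ T := h
    have hcoe : ((n • s : S) : V) = n • (s : V) := rfl
    rw [hcoe] at hmem
    have hsT : (s : V) ∈ T := hTprim _ s.2 n hn hmem
    rw [← LinearMap.mem_ker, Submodule.ker_mkQ]
    exact hsT
  haveI : Module.Free ℤ (S ⧸ T') := Module.free_of_finite_type_torsion_free'
  obtain ⟨σ, hσ⟩ := Module.projective_lifting_property T'.mkQ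
    (LinearMap.id : (S ⧸ T') →ₗ[ℤ] (S ⧸ T')) T'.mkQ_surjective
  set ρ : S →ₗ[ℤ] S := LinearMap.id - σ.comp T'.mkQ with hρ
  have hρT' : ∀ s : S, ((ρ s : S) : V) ∈ T := by
    intro s
    have h5 : ρ s ∈ T' := by
      rw [← Submodule.ker_mkQ T', LinearMap.mem_ker]
      have h6 : T'.mkQ (σ (T'.mkQ s)) = T'.mkQ s :=
        congrArg (fun f : (S ⧸ T') →ₗ[ℤ] (S ⧸ T') => f (T'.mkQ s)) hσ
      simp only [hρ, LinearMap.sub_apply, LinearMap.id_apply, LinearMap.comp_apply, map_sub, h6,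
        sub_self]
    exact h5
  have hρfix : ∀ (t : S), (t : V) ∈ T → ρ t = t := by
    intro t ht
    have h7 : T'.mkQ t = 0 := by
      rw [← LinearMap.mem_ker, Submodule.ker_mkQ]
      exact ht
    simp only [hρ, LinearMap.sub_apply, LinearMap.id_apply, LinearMap.comp_apply, h7, map_zero,
      sub_zero]
  haveI : Module.Free ℤ S := Module.free_of_finite_type_torsion_free'
  set c := Module.Free.chooseBasis ℤ S with hc
  have hindZ : LinearIndependent ℤ (fun i => ((c i : S) : V)) :=
    c.linearIndependent.map' S.subtype (Submodule.ker_subtype S)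
  have hindQ : LinearIndependent ℚ (fun i => ((c i : S) : V)) :=
    (LinearIndependent.iff_fractionRing ℤ ℚ).mp hindZ
  have hspanQ : ⊤ ≤ Submodule.span ℚ (Set.range fun i => ((c i : S) : V)) := by
    rw [← hSspan]
    refine Submodule.span_le.mpr ?_
    intro x hx
    have hxZ : x ∈ Submodule.span ℤ (Set.range fun i => ((c i : S) : V)) := by
      have hrange : (Set.range fun i => ((c i : S) : V)) = S.subtype '' (Set.range c) := by
        rw [← Set.range_comp]; rfl
      rw [hrange, ← Submodule.map_span, c.span_eq, Submodule.map_subtype_top]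
      exact hx
    exact Submodule.span_subset_span ℤ ℚ _ hxZ
  set d : Module.Basis (Module.Free.ChooseBasisIndex ℤ S) ℚ V := Module.Basis.mk hindQ hspanQ with hd
  set F : S →ₗ[ℤ] ℚ := ((B v).restrictScalars ℤ).comp (S.subtype.comp ρ) with hF
  set G : V →ₗ[ℚ] ℚ := d.constr ℚ (fun i => F (c i)) with hG
  have hGF : ∀ s : S, G (s : V) = F s := by
    have hext : (G.restrictScalars ℤ).comp S.subtype = F := by
      apply c.ext
      intro i
      have hdi : ((c i : S) : V) = d i := (Module.Basis.mk_apply hindQ hspanQ i).symm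
      simp only [LinearMap.comp_apply, LinearMap.restrictScalars_apply, Submodule.subtype_apply]
      rw [hdi, hG]
      exact d.constr_basis ℚ (fun i => F (c i)) i
    intro s
    exact congrArg (fun f : S →ₗ[ℤ] ℚ => f s) hext
  set w : V := (B.toDual hBnd).symm G with hw
  have hBw : ∀ u : V, B w u = G u := fun u =>
    LinearMap.BilinForm.apply_toDual_symm_apply G u
  have hwdual : InDual B S w := by
    intro y hy
    obtain ⟨n, hn⟩ := hvd _ (hρT' ⟨y, hy⟩)
    refine ⟨n, ?_⟩
    rw [hBw, hGF ⟨y, hy⟩]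
    exact hn
  have hwvT : ∀ t ∈ T, B (w - v) t = 0 := by
    intro t ht
    have h1 : B w t = B v t := by
      rw [hBw, hGF ⟨t, hTS ht⟩, hF]
      simp only [LinearMap.comp_apply, LinearMap.restrictScalars_apply, Submodule.subtype_apply]
      rw [hρfix ⟨t, hTS ht⟩ ht]
    rw [map_sub, LinearMap.sub_apply, h1, sub_self]
  have hwvK : w - v ∈ Kℚ := by
    rw [hKQ, LinearMap.BilinForm.mem_orthogonal_iff]
    intro t ht
    rw [hBsymm t (w - v)]
    have hker : Tℚ ≤ LinearMap.ker (B (w - v)) := by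
      rw [hTQ]
      refine Submodule.span_le.mpr ?_
      intro t' ht'
      exact LinearMap.mem_ker.mpr (hwvT t' ht')
    exact hker ht
  have hgw : g w - w ∈ S := hgstabS w hwdual
  have heq : g w - w = g v - v := by
    have h1 : g (w - v) = w - v := hfixKQ _ hwvK
    rw [map_sub] at h1
    rw [sub_eq_sub_iff_sub_eq_sub]
    exact h1
  have hgvT : g v - v ∈ Tℚ := by
    have hgv : g v ∈ Tℚ := by
      apply hKperp
      intro k hk
      rw [← hfixKQ k hk, hgisom]
      exact hBsymm v k ▸ hmemK k hk v hv
    exact Submodule.sub_mem _ hgv hv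
  exact hTcl _ hgvT (heq ▸ hgw)
end

section
/- Let S be an even lattice, let T ⊆ S be a primitive sublattice on which the form is nondegenerate, and let K = T^⊥ be its orthogonal complement in S. Let Stab(T,S)* = {g ∈ O(S)* : g(T) = T} and let Γ ≤ O(T) be the image of Stab(T,S)* under restriction to T. Then O(T)* is a normal subgroup of Γ and the index satisfies [Γ : O(T)*] ≤ |O(K)|, the cardinality of the isometry group of K. (Group-theoretic content of Proposition 4.2: the degree of the map induced by a primitive embedding T ↪ S is bounded only in terms of the orthogonal group of the complement.) -/
/-- `g` belongs to `Stab(T,S)* = {g ∈ O(S)* : g (T) = T}`: it is an isometry of the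
ambient space which preserves the (full) lattice `S`, acts trivially on the discriminant
group of `S`, and maps `T` onto `T`. -/
def MemStab {V : Type*} [AddCommGroup V] [Module ℚ V]
    (B : LinearMap.BilinForm ℚ V) (S T : Submodule ℤ V) (g : V ≃ₗ[ℚ] V) : Prop :=
  (∀ x y : V, B (g x) (g y) = B x y) ∧
  (∀ x : V, x ∈ S ↔ g x ∈ S) ∧
  (∀ v : V, InDual B S v → g v - v ∈ S) ∧
  (∀ x : V, x ∈ T ↔ g x ∈ T)

/-- `g` restricts to a *stable* isometry of `T`, i.e. its restriction lies in `O(T)*`: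
`g v - v ∈ T` for every `v` in the dual lattice `T^∨ ⊆ T ⊗ ℚ`. -/
def RestrictionStable {V : Type*} [AddCommGroup V] [Module ℚ V]
    (B : LinearMap.BilinForm ℚ V) (T : Submodule ℤ V) (g : V ≃ₗ[ℚ] V) : Prop :=
  ∀ v : V, v ∈ Submodule.span ℚ (T : Set V) → InDual B T v → g v - v ∈ T

/-- Clearing denominators: an element of the `ℚ`-span of a `ℤ`-submodule has a nonzero
integer multiple in the submodule. -/
lemma aux_clear_denom {V : Type*} [AddCommGroup V] [Module ℚ V]
    (M : Submodule ℤ V) {x : V} (hx : x ∈ Submodule.span ℚ (M : Set V)) :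
    ∃ n : ℤ, n ≠ 0 ∧ (n : ℚ) • x ∈ M := by
  induction hx using Submodule.span_induction with
  | mem y hy => exact ⟨1, one_ne_zero, by simpa using hy⟩
  | zero => exact ⟨1, one_ne_zero, by simp⟩
  | add y z hy hz ihy ihz =>
      obtain ⟨n, hn, hny⟩ := ihy
      obtain ⟨m, hm, hmz⟩ := ihz
      refine ⟨n * m, mul_ne_zero hn hm, ?_⟩
      have h1 : ((n * m : ℤ) : ℚ) • (y + z) = m • ((n : ℚ) • y) + n • ((m : ℚ) • z) := by
        push_cast
        rw [smul_add]
        rw [← Int.cast_smul_eq_zsmul ℚ m ((n:ℚ) • y), ← Int.cast_smul_eq_zsmul ℚ n ((m:ℚ) • z)]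
        rw [smul_smul, smul_smul]
        ring_nf
      rw [h1]
      exact M.add_mem (M.smul_mem m hny) (M.smul_mem n hmz)
  | smul q y hy ihy =>
      obtain ⟨n, hn, hny⟩ := ihy
      refine ⟨n * q.den, mul_ne_zero hn (by exact_mod_cast q.den_nz), ?_⟩
      have h1 : ((n * (q.den : ℤ) : ℤ) : ℚ) • (q • y) = q.num • ((n : ℚ) • y) := by
        rw [← Int.cast_smul_eq_zsmul ℚ q.num ((n:ℚ) • y)]
        rw [smul_smul, smul_smul]
        congr 1
        push_cast
        rw [mul_assoc, Rat.den_mul_eq_num]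
        ring
      rw [h1]
      exact M.smul_mem q.num hny

/-- A `ℚ`-linear equivalence mapping a `ℤ`-submodule into itself maps its `ℚ`-span into
itself. -/
lemma aux_maps_span {V : Type*} [AddCommGroup V] [Module ℚ V]
    (T : Submodule ℤ V) (g : V ≃ₗ[ℚ] V) (hg : ∀ x ∈ T, g x ∈ T) :
    ∀ x ∈ Submodule.span ℚ (T : Set V), g x ∈ Submodule.span ℚ (T : Set V) := by
  intro x hx
  induction hx using Submodule.span_induction with
  | mem y hy => exact Submodule.subset_span (hg y hy)
  | zero => simp
  | add y z hy hz ihy ihz => rw [map_add]; exact Submodule.add_mem _ ihy ihz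
  | smul q y hy ihy => rw [map_smul]; exact Submodule.smul_mem _ q ihy

set_option maxHeartbeats 1000000 in
/-- Let `S` be an even lattice, `T ⊆ S` a primitive nondegenerate
sublattice and `K = T^⊥` its orthogonal complement in `S`.  Let `Γ ≤ O(T)` be the image of
`Stab(T,S)*` under restriction to `T`.  Then `O(T)*` is normal in `Γ` (first conclusion:
conjugation by elements of `Stab(T,S)*` preserves stability on `T`) and
`[Γ : O(T)*] ≤ |O(K)|` (second conclusion: two elements of `Stab(T,S)*` with the same
restriction to `K` lie in the same `O(T)*`-coset, so the cosets inject into `O(K)` via the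
restriction `g ↦ g|_K`). -/
theorem stable_subgroup_normal_and_index_bounded_by_complement
    {V : Type*} [AddCommGroup V] [Module ℚ V]
    (B : LinearMap.BilinForm ℚ V)
    (hBsymm : ∀ x y : V, B x y = B y x) (hBnd : B.Nondegenerate)
    (S T : Submodule ℤ V)
    -- `S` is an even lattice:
    (hSfg : S.FG) (hSspan : Submodule.span ℚ (S : Set V) = ⊤)
    (hSint : ∀ x ∈ S, ∀ y ∈ S, ∃ n : ℤ, B x y = (n : ℚ))
    (hSeven : ∀ x ∈ S, ∃ n : ℤ, B x x = 2 * (n : ℚ))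
    -- `T` is a primitive sublattice of `S` on which the form is nondegenerate:
    (hTS : T ≤ S)
    (hTprim : ∀ x ∈ S, ∀ n : ℤ, n ≠ 0 → n • x ∈ T → x ∈ T)
    (hTnd : ∀ x ∈ T, (∀ y ∈ T, B x y = 0) → x = 0) :
    -- `O(T)*` is normal in `Γ`:
    (∀ a h : V ≃ₗ[ℚ] V, MemStab B S T a → MemStab B S T h → RestrictionStable B T h →
      RestrictionStable B T (a * h * a⁻¹)) ∧
    -- `[Γ : O(T)*] ≤ |O(K)|`: elements of `Stab(T,S)*` with equal restriction to
    -- `K = T^⊥ = {x ∈ S : B x t = 0 ∀ t ∈ T}` lie in the same `O(T)*`-coset: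
    (∀ a b : V ≃ₗ[ℚ] V, MemStab B S T a → MemStab B S T b →
      (∀ x ∈ S, (∀ t ∈ T, B x t = 0) → a x = b x) →
      RestrictionStable B T (a⁻¹ * b)) := by
  constructor
  · -- normality
    rintro a h ⟨haB, haS, haD, haT⟩ ⟨hhB, hhS, hhD, hhT⟩ hhst v hvspan hvdual
    -- w := a⁻¹ v
    have haTsymm : ∀ x ∈ T, a.symm x ∈ T := by
      intro x hx
      have := (haT (a.symm x)).mpr
      simp only [LinearEquiv.apply_symm_apply] at this
      exact this hx
    have hwspan : a.symm v ∈ Submodule.span ℚ (T : Set V) :=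
      aux_maps_span T a.symm haTsymm v hvspan
    have hwdual : InDual B T (a.symm v) := by
      intro y hy
      have h1 : B (a.symm v) y = B v (a y) := by
        simpa using (haB (a.symm v) y).symm
      rw [h1]
      exact hvdual (a y) ((haT y).mp hy)
    have hmem : h (a.symm v) - a.symm v ∈ T := hhst _ hwspan hwdual
    have hmem2 : a (h (a.symm v) - a.symm v) ∈ T := (haT _).mp hmem
    have key : (a * h * a⁻¹) v - v = a (h (a.symm v) - a.symm v) := by
      have h0 : (a * h * a⁻¹) v = a (h (a.symm v)) := rfl
      rw [h0, map_sub]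
      simp
    rw [key]; exact hmem2
  · -- index bound
    rintro a b ⟨haB, haS, haD, haT⟩ ⟨hbB, hbS, hbD, hbT⟩ hK v hvspan hvdual
    -- abbreviation for the action of a⁻¹ * b
    have hgapp : ∀ x : V, (a⁻¹ * b) x = a.symm (b x) := fun _ => rfl
    have haTsymm : ∀ x ∈ T, a.symm x ∈ T := by
      intro x hx
      have := (haT (a.symm x)).mpr
      simp only [LinearEquiv.apply_symm_apply] at this
      exact this hx
    have haSsymm : ∀ x ∈ S, a.symm x ∈ S := by
      intro x hx
      have := (haS (a.symm x)).mpr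
      simp only [LinearEquiv.apply_symm_apply] at this
      exact this hx
    -- the restriction of a⁻¹ ∘ b fixes K pointwise
    have hgfix : ∀ x ∈ S, (∀ t ∈ T, B x t = 0) → a.symm (b x) = x := by
      intro x hx hperp
      rw [← hK x hx hperp]; simp
    -- (a⁻¹ ∘ b) acts trivially on the discriminant group of S
    have hbdualS : ∀ u : V, InDual B S u → InDual B S (b u) := by
      intro u hu y hy
      have h1 : B (b u) y = B u (b.symm y) := by
        simpa using hbB u (b.symm y)
      rw [h1]
      refine hu _ ?_
      have := (hbS (b.symm y)).mpr
      simp only [LinearEquiv.apply_symm_apply] at this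
      exact this hy
    have hasymmD : ∀ u : V, InDual B S u → a.symm u - u ∈ S := by
      intro u hu
      have hz : InDual B S (a.symm u) := by
        intro y hy
        have h1 : B (a.symm u) y = B u (a y) := by
          simpa using (haB (a.symm u) y).symm
        rw [h1]
        exact hu _ ((haS y).mp hy)
      have := haD (a.symm u) hz
      simp only [LinearEquiv.apply_symm_apply] at this
      rw [show a.symm u - u = -(u - a.symm u) by abel]
      exact S.neg_mem this
    have hgD : ∀ u : V, InDual B S u → a.symm (b u) - u ∈ S := by
      intro u hu
      rw [show a.symm (b u) - u = (a.symm (b u) - b u) + (b u - u) by abel]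
      exact S.add_mem (hasymmD (b u) (hbdualS u hu)) (hbD u hu)
    -- Set up the lattice-theoretic machinery to construct an extension u of v to S^∨.
    haveI : NoZeroSMulDivisors ℤ V := by
      constructor
      intro n x hnx
      rcases eq_or_ne n 0 with h | h
      · exact Or.inl h
      · right
        have : ((n : ℤ) : ℚ) • x = 0 := by rw [Int.cast_smul_eq_zsmul]; exact hnx
        have hq : ((n : ℤ) : ℚ) ≠ 0 := by exact_mod_cast h
        exact (smul_eq_zero.mp this).resolve_left hq
    haveI hSfin : Module.Finite ℤ S := (Module.Finite.iff_fg (N := S)).mpr hSfg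
    -- the quotient S / T is finite and torsion-free, hence free, hence projective
    set T' : Submodule ℤ S := T.comap S.subtype with hT'
    haveI : NoZeroSMulDivisors ℤ (S ⧸ T') := by
      constructor
      intro n x hnx
      rcases eq_or_ne n 0 with h | h
      · exact Or.inl h
      · right
        obtain ⟨y, rfl⟩ := Submodule.Quotient.mk_surjective T' x
        have : ((n • y : S) : V) ∈ T := by
          have : n • y ∈ T' := by
            rwa [← Submodule.Quotient.mk_smul, Submodule.Quotient.mk_eq_zero] at hnx
          exact this
        have hyT : (y : V) ∈ T := by
          refine hTprim (y : V) y.2 n h ?_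
          simpa using this
        rw [Submodule.Quotient.mk_eq_zero]
        exact hyT
    obtain ⟨sec, hsec⟩ := Module.projective_lifting_property T'.mkQ
      (LinearMap.id : (S ⧸ T') →ₗ[ℤ] S ⧸ T') (Submodule.mkQ_surjective T')
    -- the projection onto the T-part
    set π : S →ₗ[ℤ] S := LinearMap.id - sec ∘ₗ T'.mkQ with hπdef
    have hπT' : ∀ x : S, π x ∈ T' := by
      intro x
      have : T'.mkQ (π x) = 0 := by
        simp only [hπdef, LinearMap.sub_apply, LinearMap.id_apply, LinearMap.comp_apply,
          map_sub]
        have := congrArg (fun f => f (T'.mkQ x)) hsec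
        simp only [LinearMap.comp_apply, LinearMap.id_apply] at this
        rw [this]
        simp
      rwa [← Submodule.Quotient.mk_eq_zero]
    have hπfix : ∀ x : S, (x : V) ∈ T → π x = x := by
      intro x hx
      have hx' : x ∈ T' := hx
      have h0 : T'.mkQ x = 0 := by
        rwa [Submodule.mkQ_apply, Submodule.Quotient.mk_eq_zero]
      simp only [hπdef, LinearMap.sub_apply, LinearMap.id_apply, LinearMap.comp_apply]
      rw [h0]
      simp
    -- choose a ℤ-basis of S; it is a ℚ-basis of V
    let ι := Module.Free.ChooseBasisIndex ℤ S
    let bS : Module.Basis ι ℤ S := Module.Free.chooseBasis ℤ S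
    let e : ι → V := fun i => (bS i : V)
    have heindZ : LinearIndependent ℤ e := by
      have := bS.linearIndependent
      exact this.map' S.subtype (Submodule.ker_subtype S)
    have heind : LinearIndependent ℚ e := by
      rw [← LinearIndependent.iff_fractionRing ℤ ℚ]
      exact heindZ
    have hespan : Submodule.span ℚ (Set.range e) = ⊤ := by
      have h1 : Submodule.span ℤ (Set.range e) = S := by
        have := bS.span_eq
        have h2 : Submodule.map S.subtype (Submodule.span ℤ (Set.range bS)) =
            Submodule.map S.subtype ⊤ := by rw [this]
        rw [Submodule.map_span, Submodule.map_top, Submodule.range_subtype] at h2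
        rw [← h2]
        congr 1
        ext x
        simp [e, Set.range_comp]
      have h3 : Submodule.span ℚ ((Submodule.span ℤ (Set.range e) : Submodule ℤ V) : Set V) =
          Submodule.span ℚ (Set.range e) := Submodule.span_span_of_tower ℤ ℚ _
      rw [h1] at h3
      rw [← h3, hSspan]
    let bV : Module.Basis ι ℚ V := Module.Basis.mk heind (le_of_eq hespan.symm)
    haveI : FiniteDimensional ℚ V := Module.Finite.of_basis bV
    -- the extension u of v
    let f : V →ₗ[ℚ] ℚ := bV.constr ℚ (fun i => B v ((π (bS i) : S) : V))
    obtain ⟨u, hu⟩ : ∃ u : V, ∀ y : V, B u y = f y := by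
      refine ⟨(B.toDual hBnd).symm f, fun y => ?_⟩
      have h0 : B.toDual hBnd ((B.toDual hBnd).symm f) = f :=
        LinearEquiv.apply_symm_apply _ _
      calc B ((B.toDual hBnd).symm f) y = (B.toDual hBnd ((B.toDual hBnd).symm f)) y := rfl
        _ = f y := by rw [h0]
    -- key identity: B u y = B v (π y) for all y in S
    have hkey : ∀ y : S, B u (y : V) = B v ((π y : S) : V) := by
      have hψ : (((B u).restrictScalars ℤ).comp S.subtype : S →ₗ[ℤ] ℚ) =
          ((B v).restrictScalars ℤ).comp (S.subtype.comp π) := by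
        apply bS.ext
        intro i
        simp only [LinearMap.comp_apply, LinearMap.restrictScalars_apply, Submodule.coe_subtype]
        have h1 : B u (bS i : V) = f (bS i : V) := hu _
        rw [h1]
        have h2 : (bS i : V) = bV i := by rw [Module.Basis.mk_apply]
        rw [h2]
        rw [Module.Basis.constr_basis]
      intro y
      have := congrArg (fun φ => φ y) hψ
      simpa using this
    have hudualS : InDual B S u := by
      intro y hy
      rw [show y = ((⟨y, hy⟩ : S) : V) from rfl, hkey ⟨y, hy⟩]
      exact hvdual _ (hπT' ⟨y, hy⟩)
    have huT : ∀ t ∈ T, B u t = B v t := by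
      intro t ht
      have h1 : t = ((⟨t, hTS ht⟩ : S) : V) := rfl
      rw [h1, hkey ⟨t, hTS ht⟩, hπfix ⟨t, hTS ht⟩ ht]
    -- a⁻¹ ∘ b fixes u - v
    have hwperp : ∀ t ∈ T, B (u - v) t = 0 := by
      intro t ht
      rw [map_sub, LinearMap.sub_apply, huT t ht, sub_self]
    have hwmemspan : u - v ∈ Submodule.span ℚ (S : Set V) := by rw [hSspan]; trivial
    obtain ⟨n, hn, hnw⟩ := aux_clear_denom S hwmemspan
    have hfixw : a.symm (b (u - v)) = u - v := by
      have hperp' : ∀ t ∈ T, B ((n : ℚ) • (u - v)) t = 0 := by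
        intro t ht
        rw [map_smul, LinearMap.smul_apply, hwperp t ht, smul_zero]
      have := hgfix _ hnw hperp'
      rw [map_smul, map_smul] at this
      have hq : (n : ℚ) ≠ 0 := by exact_mod_cast hn
      exact smul_right_injective V hq this
    -- conclude: d := a⁻¹ (b v) - v lies in S and in span ℚ T, hence in T by primitivity
    have hdS : a.symm (b v) - v ∈ S := by
      have h1 := hgD u hudualS
      have h2 : a.symm (b u) - u = a.symm (b v) - v := by
        have h3 : a.symm (b u) = a.symm (b v) + (u - v) := by
          have : a.symm (b u) = a.symm (b v) + a.symm (b (u - v)) := by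
            have h4 : v + (u - v) = u := by abel
            rw [← map_add, ← map_add, h4]
          rw [this, hfixw]
        rw [h3]; abel
      rwa [h2] at h1
    have hdspan : a.symm (b v) - v ∈ Submodule.span ℚ (T : Set V) := by
      refine Submodule.sub_mem _ ?_ hvspan
      have hb1 : b v ∈ Submodule.span ℚ (T : Set V) :=
        aux_maps_span T b (fun x hx => (hbT x).mp hx) v hvspan
      exact aux_maps_span T a.symm haTsymm _ hb1
    obtain ⟨m, hm, hmd⟩ := aux_clear_denom T hdspan
    have hdT : a.symm (b v) - v ∈ T := by
      refine hTprim _ hdS m hm ?_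
      rwa [← Int.cast_smul_eq_zsmul ℚ m]
    rw [hgapp]
    exact hdT
end

section
/- Let S be an even lattice and let T ⊆ S be a primitive sublattice on which the form is nondegenerate, with rank(T) = rank(S) − 1. Let Stab(T,S)* = {g ∈ O(S)* : g(T) = T} and let Γ ≤ O(T) be the image of Stab(T,S)* under restriction to T. Then [Γ : O(T)*] ≤ 2. (Corank-one case of Proposition 4.2: here K = T^⊥ has rank 1 and O(K) = {±1}.) -/
section Aux

variable {V : Type*} [AddCommGroup V] [Module ℚ V]

/-- clearing denominators in a rational span -/
lemma exists_int_smul_mem_s6 (T : Submodule ℤ V) {x : V}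
    (hx : x ∈ Submodule.span ℚ (T : Set V)) :
    ∃ n : ℤ, n ≠ 0 ∧ (n : ℚ) • x ∈ T := by
  induction hx using Submodule.span_induction with
  | mem x hx => exact ⟨1, one_ne_zero, by simpa using hx⟩
  | zero => exact ⟨1, one_ne_zero, by simp⟩
  | add x y _ _ hx hy =>
      obtain ⟨m, hm, hmx⟩ := hx; obtain ⟨n, hn, hny⟩ := hy
      refine ⟨m * n, mul_ne_zero hm hn, ?_⟩
      have h1 : ((m * n : ℤ) : ℚ) • (x + y)
          = (n : ℚ) • ((m : ℚ) • x) + (m : ℚ) • ((n : ℚ) • y) := by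
        push_cast; rw [smul_add, smul_smul, smul_smul]; ring_nf
      rw [h1]
      have h2 : (n : ℚ) • ((m : ℚ) • x) = n • ((m : ℚ) • x) := by
        rw [Int.cast_smul_eq_zsmul]
      have h3 : (m : ℚ) • ((n : ℚ) • y) = m • ((n : ℚ) • y) := by
        rw [Int.cast_smul_eq_zsmul]
      rw [h2, h3]
      exact T.add_mem (T.smul_mem _ hmx) (T.smul_mem _ hny)
  | smul q x _ hx =>
      obtain ⟨n, hn, hnx⟩ := hx
      by_cases hq : q = 0
      · exact ⟨1, one_ne_zero, by simp [hq]⟩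
      · refine ⟨q.den * n, ?_, ?_⟩
        · exact mul_ne_zero (by exact_mod_cast q.den_ne_zero) hn
        · have h1 : (((q.den : ℤ) * n : ℤ) : ℚ) • (q • x)
              = ((q.num : ℚ)) • ((n : ℚ) • x) := by
            push_cast [smul_smul]
            congr 1
            have hden : (q.den : ℚ) * q = q.num := by
              rw [mul_comm]; exact Rat.mul_den_eq_num q
            rw [mul_comm ((q.den : ℚ)) ((n : ℚ)), mul_assoc, hden]
            ring
          rw [h1, Int.cast_smul_eq_zsmul]
          exact T.smul_mem _ hnx

/-- A finitely generated `ℤ`-submodule of `ℚ` is cyclic. -/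
lemma fg_rat_cyclic (M : Submodule ℤ ℚ) (hM : M.FG) :
    ∃ q : ℚ, M = Submodule.span ℤ {q} := by
  obtain ⟨s, rfl⟩ := hM
  set d : ℤ := ∏ x ∈ s, (x.den : ℤ) with hd
  have hd0 : (d : ℚ) ≠ 0 := by
    have : d ≠ 0 := Finset.prod_ne_zero_iff.mpr
      (fun x _ => by exact_mod_cast x.den_ne_zero)
    exact_mod_cast this
  set e : ℚ ≃ₗ[ℤ] ℚ :=
    (LinearEquiv.smulOfNeZero ℚ ℚ (d : ℚ) hd0).restrictScalars ℤ with he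
  have he_apply : ∀ x : ℚ, e x = (d : ℚ) * x := fun x => rfl
  set ψ : ℤ →ₗ[ℤ] ℚ := Algebra.linearMap ℤ ℚ with hψ
  have hmap : (Submodule.span ℤ (s : Set ℚ)).map (e : ℚ →ₗ[ℤ] ℚ)
      = Submodule.span ℤ ((e : ℚ →ₗ[ℤ] ℚ) '' s) := Submodule.map_span _ _
  have hle : Submodule.span ℤ ((e : ℚ →ₗ[ℤ] ℚ) '' s) ≤ LinearMap.range ψ := by
    rw [Submodule.span_le]
    rintro y ⟨x, hxs, rfl⟩
    have hdvd : (x.den : ℤ) ∣ d := Finset.dvd_prod_of_mem _ hxs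
    obtain ⟨c, hc⟩ := hdvd
    refine ⟨x.num * c, ?_⟩
    show ((x.num * c : ℤ) : ℚ) = _
    have : (e : ℚ →ₗ[ℤ] ℚ) x = (d : ℚ) * x := he_apply x
    rw [this, hc]
    push_cast
    rw [mul_comm (x.den : ℚ) (c : ℚ), mul_assoc, mul_comm (x.den : ℚ) x,
      Rat.mul_den_eq_num]
    ring
  set I : Submodule ℤ ℤ := (Submodule.span ℤ ((e : ℚ →ₗ[ℤ] ℚ) '' s)).comap ψ with hI
  have hIprin : I.IsPrincipal := inferInstance
  obtain ⟨k, hk⟩ := hIprin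
  have hmapI : I.map ψ = Submodule.span ℤ ((e : ℚ →ₗ[ℤ] ℚ) '' s) :=
    Submodule.map_comap_eq_self hle
  have hspan_k : I.map ψ = Submodule.span ℤ {(k : ℚ)} := by
    rw [hk, Submodule.map_span]
    congr 1
    simp [hψ]
  refine ⟨e.symm (k : ℚ), ?_⟩
  apply Submodule.map_injective_of_injective e.injective
  show Submodule.map (e : ℚ →ₗ[ℤ] ℚ) _ = Submodule.map (e : ℚ →ₗ[ℤ] ℚ) _
  rw [hmap, ← hmapI, hspan_k, Submodule.map_span]
  congr 1
  simp

end Aux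

section Stab

variable {V : Type*} [AddCommGroup V] [Module ℚ V]
variable (B : LinearMap.BilinForm ℚ V) (S T : Submodule ℤ V)

lemma memStab_inv {g : V ≃ₗ[ℚ] V} (hg : MemStab B S T g) : MemStab B S T g⁻¹ := by
  obtain ⟨hB, hS, hst, hT⟩ := hg
  have hinv : ∀ x : V, (g⁻¹ : V ≃ₗ[ℚ] V) x = g.symm x := fun _ => rfl
  refine ⟨?_, ?_, ?_, ?_⟩
  · intro x y
    rw [hinv, hinv, ← hB (g.symm x) (g.symm y)]
    simp
  · intro x
    rw [hinv]
    constructor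
    · intro hx
      have := (hS (g.symm x)).mpr (by simpa using hx)
      exact this
    · intro hx
      have := (hS (g.symm x)).mp hx
      simpa using this
  · intro v hv
    have hv' : InDual B S (g.symm v) := by
      intro y hy
      have h1 : B (g.symm v) y = B v (g y) := by
        rw [← hB (g.symm v) y]; simp
      rw [h1]
      exact hv (g y) ((hS y).mp hy)
    have h2 := hst (g.symm v) hv'
    rw [hinv]
    have h4 : g.symm v - v = -(g (g.symm v) - g.symm v) := by simp
    rw [h4]
    exact S.neg_mem h2
  · intro x
    rw [hinv]
    constructor
    · intro hx
      exact (hT (g.symm x)).mpr (by simpa using hx)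
    · intro hx
      have := (hT (g.symm x)).mp hx
      simpa using this

lemma memStab_mul {g h : V ≃ₗ[ℚ] V} (hg : MemStab B S T g) (hh : MemStab B S T h) :
    MemStab B S T (g * h) := by
  obtain ⟨hB, hS, hst, hT⟩ := hg
  obtain ⟨hB', hS', hst', hT'⟩ := hh
  have hmul : ∀ x : V, (g * h) x = g (h x) := fun _ => rfl
  refine ⟨?_, ?_, ?_, ?_⟩
  · intro x y; rw [hmul, hmul, hB, hB']
  · intro x; rw [hmul, hS' x, hS (h x)]
  · intro v hv
    rw [hmul]
    have hv' : InDual B S (h v) := by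
      intro y hy
      have h1 : B (h v) y = B v (h.symm y) := by
        rw [← hB' v (h.symm y)]; simp
      rw [h1]
      refine hv (h.symm y) ?_
      have := (hS' (h.symm y)).mpr (by simpa using hy)
      exact this
    have h1 := hst (h v) hv'
    have h2 := hst' v hv
    have h3 : g (h v) - v = (g (h v) - h v) + (h v - v) := by
      rw [sub_add_sub_cancel]
    rw [h3]
    exact S.add_mem h1 h2
  · intro x; rw [hmul, hT' x, hT (h x)]

lemma stab_maps_Tq {g : V ≃ₗ[ℚ] V} (hg : MemStab B S T g) :
    ∀ x ∈ Submodule.span ℚ (T : Set V), g x ∈ Submodule.span ℚ (T : Set V) := by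
  intro x hx
  induction hx using Submodule.span_induction with
  | mem x hx => exact Submodule.subset_span ((hg.2.2.2 x).mp hx)
  | zero => simp
  | add x y _ _ hx hy => rw [map_add]; exact Submodule.add_mem _ hx hy
  | smul q x _ hx => rw [map_smul]; exact Submodule.smul_mem _ _ hx

end Stab

section Core

variable {V : Type*} [AddCommGroup V] [Module ℚ V]
variable {B : LinearMap.BilinForm ℚ V} {S T : Submodule ℤ V}

lemma sat_int_Tq (hTprim : ∀ x ∈ S, ∀ n : ℤ, n ≠ 0 → n • x ∈ T → x ∈ T) :
    ∀ x ∈ S, x ∈ Submodule.span ℚ (T : Set V) → x ∈ T := by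
  intro x hxS hxTq
  obtain ⟨n, hn, hnx⟩ := exists_int_smul_mem_s6 T hxTq
  refine hTprim x hxS n hn ?_
  rwa [Int.cast_smul_eq_zsmul] at hnx

lemma core_stable
    (hSfg : S.FG) (hSspan : Submodule.span ℚ (S : Set V) = ⊤)
    (hTprim : ∀ x ∈ S, ∀ n : ℤ, n ≠ 0 → n • x ∈ T → x ∈ T)
    (w₀ : V)
    (hww : B w₀ w₀ ≠ 0)
    (hKer : ∀ w : V, B w₀ w = 0 → w ∈ Submodule.span ℚ (T : Set V))
    (hw₀T : ∀ t ∈ T, B w₀ t = 0)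
    {h : V ≃ₗ[ℚ] V} (hh : MemStab B S T h) (hfix : h w₀ = w₀) :
    RestrictionStable B T h := by
  intro v hvTq hvdual
  have hSTq := sat_int_Tq (S := S) (T := T) hTprim
  set f : V →ₗ[ℚ] ℚ := B w₀ with hf
  set M : Submodule ℤ ℚ := S.map (f.restrictScalars ℤ) with hM
  obtain ⟨q₀, hq₀⟩ := fg_rat_cyclic M (hSfg.map _)
  have hq₀ne : q₀ ≠ 0 := by
    rintro rfl
    have hbot : M = ⊥ := by rw [hq₀]; simp
    have hzero : ∀ s ∈ S, f s = 0 := by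
      intro s hs
      have hmem : f s ∈ M := ⟨s, hs, rfl⟩
      rw [hbot] at hmem; simpa using hmem
    have hall : ∀ y : V, y ∈ Submodule.span ℚ (S : Set V) → f y = 0 := by
      intro y hy
      induction hy using Submodule.span_induction with
      | mem x hx => exact hzero x hx
      | zero => simp
      | add x y _ _ hx hy => rw [map_add, hx, hy, add_zero]
      | smul q x _ hx => rw [map_smul, hx, smul_zero]
    exact hww (hall w₀ (by rw [hSspan]; trivial))
  have hq₀mem : q₀ ∈ M := by rw [hq₀]; exact Submodule.mem_span_singleton_self q₀
  obtain ⟨s₀, hs₀S, hs₀⟩ := hq₀mem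
  have hBw₀s₀ : B w₀ s₀ = q₀ := hs₀
  set c : ℚ := -(B v s₀) / q₀ with hc
  set u : V := v + c • w₀ with hu
  have hBus₀ : B u s₀ = 0 := by
    rw [hu, map_add, LinearMap.add_apply, map_smul, LinearMap.smul_apply,
      smul_eq_mul, hBw₀s₀, hc]
    field_simp
    ring
  have hudual : InDual B S u := by
    intro s hs
    have hfs : f s ∈ M := ⟨s, hs, rfl⟩
    rw [hq₀] at hfs
    obtain ⟨m, hm⟩ := Submodule.mem_span_singleton.mp hfs
    have hm' : f s = (m : ℚ) * q₀ := by
      rw [← hm, zsmul_eq_mul]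
    set t : V := s - (m : ℚ) • s₀ with ht
    have htS : t ∈ S := by
      rw [ht, Int.cast_smul_eq_zsmul]
      exact S.sub_mem hs (S.smul_mem m hs₀S)
    have hft : B w₀ t = 0 := by
      rw [ht, map_sub, map_smul, smul_eq_mul]
      show f s - (m : ℚ) * f s₀ = 0
      rw [hm']
      show (m : ℚ) * q₀ - (m : ℚ) * B w₀ s₀ = 0
      rw [hBw₀s₀]; ring
    have htT : t ∈ T := hSTq t htS (hKer t hft)
    obtain ⟨n, hn⟩ := hvdual t htT
    have hBut : B u t = (n : ℚ) := by
      rw [hu, map_add, LinearMap.add_apply, map_smul, LinearMap.smul_apply,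
        smul_eq_mul]
      show B v t + c * B w₀ t = (n : ℚ)
      rw [hft, hn]; ring
    refine ⟨n, ?_⟩
    have hsdec : s = (m : ℚ) • s₀ + t := by rw [ht]; abel
    rw [hsdec, map_add, map_smul, smul_eq_mul, hBus₀, hBut]; ring
  have hhuu : h u - u ∈ S := hh.2.2.1 u hudual
  have hkey : h v - v = h u - u := by
    have h1 : h u = h v + c • w₀ := by rw [hu, map_add, map_smul, hfix]
    rw [h1, hu]; abel
  have hTqmem : h v - v ∈ Submodule.span ℚ (T : Set V) :=
    Submodule.sub_mem _ (stab_maps_Tq B S T hh v hvTq) hvTq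
  exact hSTq _ (hkey ▸ hhuu) hTqmem

end Core

/-- Let `S` be an even lattice and `T ⊆ S` a primitive nondegenerate
sublattice with `rank T = rank S - 1`.  Let `Γ ≤ O(T)` be the image of `Stab(T,S)*` under
restriction to `T`.  Then `[Γ : O(T)*] ≤ 2`: among any three elements of `Stab(T,S)*`, two
of them lie in the same `O(T)*`-coset. -/
theorem index_at_most_two_in_corank_one
    {V : Type*} [AddCommGroup V] [Module ℚ V]
    (B : LinearMap.BilinForm ℚ V)
    (hBsymm : ∀ x y : V, B x y = B y x) (hBnd : B.Nondegenerate)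
    (S T : Submodule ℤ V)
    -- `S` is an even lattice:
    (hSfg : S.FG) (hSspan : Submodule.span ℚ (S : Set V) = ⊤)
    (hSint : ∀ x ∈ S, ∀ y ∈ S, ∃ n : ℤ, B x y = (n : ℚ))
    (hSeven : ∀ x ∈ S, ∃ n : ℤ, B x x = 2 * (n : ℚ))
    -- `T` is a primitive sublattice of `S` on which the form is nondegenerate:
    (hTS : T ≤ S)
    (hTprim : ∀ x ∈ S, ∀ n : ℤ, n ≠ 0 → n • x ∈ T → x ∈ T)
    (hTnd : ∀ x ∈ T, (∀ y ∈ T, B x y = 0) → x = 0)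
    -- `T` has corank one in `S`:
    (hcorank : Module.finrank ℚ ↥(Submodule.span ℚ (T : Set V)) + 1 = Module.finrank ℚ V) :
    ∀ g₀ g₁ g₂ : V ≃ₗ[ℚ] V,
      MemStab B S T g₀ → MemStab B S T g₁ → MemStab B S T g₂ →
      RestrictionStable B T (g₀⁻¹ * g₁) ∨ RestrictionStable B T (g₀⁻¹ * g₂) ∨
        RestrictionStable B T (g₁⁻¹ * g₂) := by
  intro g₀ g₁ g₂ h₀ h₁ h₂
  have hfd : FiniteDimensional ℚ V := FiniteDimensional.of_finrank_pos (by omega)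
  have hrefl : B.IsRefl := fun x y hxy => by rw [hBsymm]; exact hxy
  -- nondegeneracy of the restriction to `span ℚ T`
  have hTqnd : ∀ x ∈ Submodule.span ℚ (T : Set V), (∀ y ∈ T, B x y = 0) → x = 0 := by
    intro x hx h0
    obtain ⟨n, hn, hnx⟩ := exists_int_smul_mem_s6 T hx
    have h1 : (n : ℚ) • x = 0 := by
      refine hTnd _ hnx (fun y hy => ?_)
      rw [map_smul, LinearMap.smul_apply, smul_eq_mul, h0 y hy, mul_zero]
    have hn' : (n : ℚ) ≠ 0 := Int.cast_ne_zero.mpr hn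
    exact (smul_eq_zero.mp h1).resolve_left hn'
  have hrest : (B.restrict (Submodule.span ℚ (T : Set V))).Nondegenerate := by
    refine ⟨?_, ?_⟩
    · rintro ⟨x, hx⟩ hxall
      refine Subtype.ext ?_
      refine hTqnd x hx (fun y hy => ?_)
      exact hxall ⟨y, Submodule.subset_span hy⟩
    · rintro ⟨x, hx⟩ hxall
      refine Subtype.ext ?_
      refine hTqnd x hx (fun y hy => ?_)
      rw [hBsymm]
      exact hxall ⟨y, Submodule.subset_span hy⟩
  have hcompl : IsCompl (Submodule.span ℚ (T : Set V))
      (B.orthogonal (Submodule.span ℚ (T : Set V))) :=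
    LinearMap.BilinForm.isCompl_orthogonal_of_restrict_nondegenerate hrefl hrest
  have hrank : Module.finrank ℚ (B.orthogonal (Submodule.span ℚ (T : Set V))) = 1 := by
    have := Submodule.finrank_add_eq_of_isCompl hcompl
    omega
  -- a generator of the rank one orthogonal complement
  obtain ⟨w₀, hw₀K, hw₀ne⟩ :
      ∃ w ∈ B.orthogonal (Submodule.span ℚ (T : Set V)), w ≠ 0 := by
    by_contra hcon
    push_neg at hcon
    have hbot : B.orthogonal (Submodule.span ℚ (T : Set V)) = ⊥ :=
      (Submodule.eq_bot_iff _).mpr hcon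
    rw [hbot, finrank_bot] at hrank
    omega
  have hKspan : Submodule.span ℚ {w₀} = B.orthogonal (Submodule.span ℚ (T : Set V)) := by
    apply Submodule.eq_of_le_of_finrank_le
      (Submodule.span_le.mpr (by simpa using hw₀K))
    rw [finrank_span_singleton hw₀ne, hrank]
  have hKw : ∀ w ∈ B.orthogonal (Submodule.span ℚ (T : Set V)), ∃ c : ℚ, w = c • w₀ := by
    intro w hw
    obtain ⟨c, hc⟩ := Submodule.mem_span_singleton.mp (hKspan ▸ hw)
    exact ⟨c, hc.symm⟩
  have hw₀orth : ∀ t ∈ Submodule.span ℚ (T : Set V), B t w₀ = 0 := by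
    intro t ht
    exact LinearMap.BilinForm.mem_orthogonal_iff.mp hw₀K t ht
  have hw₀orth' : ∀ t ∈ Submodule.span ℚ (T : Set V), B w₀ t = 0 :=
    fun t ht => hrefl _ _ (hw₀orth t ht)
  have hdecomp : ∀ y : V, ∃ t ∈ Submodule.span ℚ (T : Set V), ∃ c : ℚ, y = t + c • w₀ := by
    intro y
    have hy : y ∈ (Submodule.span ℚ (T : Set V)) ⊔
        (B.orthogonal (Submodule.span ℚ (T : Set V))) := by
      rw [hcompl.sup_eq_top]; trivial
    obtain ⟨t, ht, k, hk, rfl⟩ := Submodule.mem_sup.mp hy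
    obtain ⟨c, rfl⟩ := hKw k hk
    exact ⟨t, ht, c, rfl⟩
  have hww : B w₀ w₀ ≠ 0 := by
    intro h0
    apply hw₀ne
    apply hBnd.1
    intro y
    obtain ⟨t, ht, c, rfl⟩ := hdecomp y
    rw [map_add, map_smul, hw₀orth' t ht, h0, smul_zero, add_zero]
  have hKer : ∀ w : V, B w₀ w = 0 → w ∈ Submodule.span ℚ (T : Set V) := by
    intro w h0
    obtain ⟨t, ht, c, rfl⟩ := hdecomp w
    rw [map_add, map_smul, hw₀orth' t ht, smul_eq_mul, zero_add] at h0
    have hc : c = 0 := by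
      rcases mul_eq_zero.mp h0 with h | h
      · exact h
      · exact absurd h hww
    rw [hc]; simpa using ht
  -- every element of the stabilizer acts on `w₀` by `±1`
  have heps : ∀ g : V ≃ₗ[ℚ] V, MemStab B S T g →
      ∃ ε : ℚ, (ε = 1 ∨ ε = -1) ∧ g w₀ = ε • w₀ := by
    intro g hg
    have hgK : g w₀ ∈ B.orthogonal (Submodule.span ℚ (T : Set V)) := by
      rw [LinearMap.BilinForm.mem_orthogonal_iff]
      intro t ht
      show B t (g w₀) = 0
      have hsymmT : g.symm t ∈ Submodule.span ℚ (T : Set V) :=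
        stab_maps_Tq B S T (memStab_inv B S T hg) t ht
      have h1 : B t (g w₀) = B (g.symm t) w₀ := by
        rw [← hg.1 (g.symm t) w₀]; simp
      rw [h1]
      exact hw₀orth _ hsymmT
    obtain ⟨c, hc⟩ := hKw _ hgK
    have hsq : c * c = 1 := by
      have h1 : B (g w₀) (g w₀) = B w₀ w₀ := hg.1 w₀ w₀
      rw [hc] at h1
      simp only [map_smul, LinearMap.smul_apply, smul_eq_mul] at h1
      have : (c * c) * B w₀ w₀ = 1 * B w₀ w₀ := by rw [one_mul]; linarith [h1]
      exact mul_right_cancel₀ hww this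
    exact ⟨c, mul_self_eq_one_iff.mp hsq, hc⟩
  -- two elements with equal sign give a stable restriction
  have hpair : ∀ gi gj : V ≃ₗ[ℚ] V, MemStab B S T gi → MemStab B S T gj →
      ∀ ε : ℚ, (ε = 1 ∨ ε = -1) → gi w₀ = ε • w₀ → gj w₀ = ε • w₀ →
      RestrictionStable B T (gi⁻¹ * gj) := by
    intro gi gj hgi hgj ε hε hi hj
    refine core_stable hSfg hSspan hTprim w₀ hww hKer
      (fun t ht => hw₀orth' t (Submodule.subset_span ht))
      (memStab_mul B S T (memStab_inv B S T hgi) hgj) ?_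
    show gi.symm (gj w₀) = w₀
    have hsymm : gi.symm w₀ = ε • w₀ := by
      have h1 := congrArg gi.symm hi
      rw [gi.symm_apply_apply, map_smul] at h1
      have h2 : ε • w₀ = ε • (ε • gi.symm w₀) := by rw [← h1]
      rw [smul_smul] at h2
      rcases hε with rfl | rfl
      · simpa using h2.symm
      · simpa using h2.symm
    rw [hj, map_smul, hsymm, smul_smul]
    rcases hε with rfl | rfl <;> simp
  obtain ⟨ε₀, hε₀, h₀w⟩ := heps g₀ h₀
  obtain ⟨ε₁, hε₁, h₁w⟩ := heps g₁ h₁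
  obtain ⟨ε₂, hε₂, h₂w⟩ := heps g₂ h₂
  rcases hε₀ with rfl | rfl <;> rcases hε₁ with rfl | rfl <;> rcases hε₂ with rfl | rfl <;>
    first
      | exact Or.inl (hpair g₀ g₁ h₀ h₁ _ (Or.inl rfl) h₀w h₁w)
      | exact Or.inl (hpair g₀ g₁ h₀ h₁ _ (Or.inr rfl) h₀w h₁w)
      | exact Or.inr (Or.inl (hpair g₀ g₂ h₀ h₂ _ (Or.inl rfl) h₀w h₂w))
      | exact Or.inr (Or.inl (hpair g₀ g₂ h₀ h₂ _ (Or.inr rfl) h₀w h₂w))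
      | exact Or.inr (Or.inr (hpair g₁ g₂ h₁ h₂ _ (Or.inl rfl) h₁w h₂w))
      | exact Or.inr (Or.inr (hpair g₁ g₂ h₁ h₂ _ (Or.inr rfl) h₁w h₂w))
end

section
/- Let S be an even lattice of signature (2_+, n_−) with n ≥ 1. For every integer N > 0 there exists P such that for every prime p ≥ P and every subgroup S' ≤ S with S/S' ≅ ℤ/pℤ, the index of O(S')* in O(S)* is strictly greater than N. Here O(S')* is viewed as a subgroup of O(S)*: every isometry of S ⊗ ℚ preserving S' and acting trivially on A_{S'} preserves S and acts trivially on A_S. -/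
/-- `g` belongs to the stable orthogonal group `O(M)*` of a full lattice `M`: it is an
isometry of the ambient space preserving `M` and acting trivially on `A_M = M^∨/M`. -/
def MemOStar {V : Type*} [AddCommGroup V] [Module ℚ V]
    (B : LinearMap.BilinForm ℚ V) (M : Submodule ℤ V) (g : V ≃ₗ[ℚ] V) : Prop :=
  (∀ x y : V, B (g x) (g y) = B x y) ∧
  (∀ x : V, x ∈ M ↔ g x ∈ M) ∧
  (∀ v : V, InDual B M v → g v - v ∈ M)

/-- The rational quadratic space `(V, B)` has signature `(pos, neg)`: it admits an
orthogonal basis with exactly `pos` vectors of positive norm and `neg` of negative norm. -/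
def HasSignature {V : Type*} [AddCommGroup V] [Module ℚ V]
    (B : LinearMap.BilinForm ℚ V) (pos neg : ℕ) : Prop :=
  ∃ b : Module.Basis (Fin (pos + neg)) ℚ V,
    (∀ i j, i ≠ j → B (b i) (b j) = 0) ∧
    (Finset.univ.filter fun i => 0 < B (b i) (b i)).card = pos ∧
    (Finset.univ.filter fun i => B (b i) (b i) < 0).card = neg

/-!
Every `h ∈ O(S')*` moves each vector of `S` into `S'`. So it suffices to find `g ∈ O(S)*` such
that, for each `1 ≤ m ≤ N`, `g ^ m` moves some vector of `S` by a vector outside `S'`: then the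
elements `g ^ i`, `i ≤ N`, lie in pairwise distinct cosets of `O(S')*`.

If `S` contains an isotropic vector `e`, complete it to a hyperbolic pair `e, f` and choose
`a, v ⊥ e, f` with `B(a, v) ≠ 0`, which is possible because `rank S ≥ 3`. The Eichler
transvections satisfy `E(e, a) ^ m = E(e, m a)` and `E(e, m a) v - v = m B(a, v) e`, so
`g = E(e, a)` works when `e ∉ S'`, and likewise with `f`. When `e, f ∈ S'`, take `g = E(e, a')`
for some `a' ⊥ e` outside `S'`; such an `a'` exists, since otherwise `B(e, f) S ⊆ S'`.

If `S` is anisotropic, pair each vector of an orthogonal basis with one of opposite norm. If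
`B(u, u) = 2A` and `B(w, w) = 2C`, then `-AC` is not a square, so Pell's equation has a solution
`ζ ≡ 1 (mod 2AC)` of infinite order, and `ζ` gives a rotation of `span {u, w}` lying in
`O(S)*`. If its `m`-th power moved both `u` and `w` only by vectors of `S'`, then
`(2 - 2 x(ζ ^ m)) u ∈ S'`, hence `u ∈ S'` once `p` is large. Finally, some basis vector lies
outside `S'`, because a fixed nonzero multiple of `S` lies in the span of the basis.
-/

theorem ZMod.intCast_ne_zero_of_abs_lt {p : ℕ} {k : ℤ} (hk : k ≠ 0) (hkp : |k| < p) :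
    (k : ZMod p) ≠ 0 := by
  rw [Ne, ZMod.intCast_zmod_eq_zero_iff_dvd]
  exact fun h => hk (Int.eq_zero_of_abs_lt_dvd h hkp)

theorem ZMod.natCast_mul_intCast_ne_zero {p : ℕ} [Fact p.Prime] {m : ℕ} {k : ℤ}
    (hm : 0 < m) (hmp : m < p) (hk : k ≠ 0) (hkp : |k| < p) : ((m * k : ℤ) : ZMod p) ≠ 0 := by
  have hm' : ((m : ℤ) : ZMod p) ≠ 0 :=
    ZMod.intCast_ne_zero_of_abs_lt (by omega) (by rw [Nat.abs_cast]; omega)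
  push_cast at hm' ⊢
  exact mul_ne_zero hm' (ZMod.intCast_ne_zero_of_abs_lt hk hkp)

section LatticeVectors

variable {V : Type*} [AddCommGroup V] [Module ℚ V] {B : LinearMap.BilinForm ℚ V}
  {S : Submodule ℤ V}

theorem exists_intCast_smul_mem (hSspan : Submodule.span ℚ (S : Set V) = ⊤) (v : V) :
    ∃ k : ℤ, k ≠ 0 ∧ (k : ℚ) • v ∈ S := by
  have hv : v ∈ Submodule.span ℚ (S : Set V) := hSspan ▸ Submodule.mem_top
  induction hv using Submodule.span_induction with
  | mem x hx => exact ⟨1, one_ne_zero, by simpa using hx⟩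
  | zero => exact ⟨1, one_ne_zero, by simp⟩
  | add x y _ _ hx hy =>
    obtain ⟨k, hk, hkx⟩ := hx
    obtain ⟨l, hl, hly⟩ := hy
    refine ⟨k * l, mul_ne_zero hk hl, ?_⟩
    have hsplit : ((k * l : ℤ) : ℚ) • (x + y) = l • ((k : ℚ) • x) + k • ((l : ℚ) • y) := by
      simp only [← Int.cast_smul_eq_zsmul ℚ]
      push_cast
      module
    rw [hsplit]
    exact S.add_mem (S.smul_mem _ hkx) (S.smul_mem _ hly)
  | smul q x _ hx =>
    obtain ⟨k, hk, hkx⟩ := hx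
    refine ⟨k * q.den, mul_ne_zero hk (by exact_mod_cast q.den_nz), ?_⟩
    have hsplit : ((k * q.den : ℤ) : ℚ) • (q • x) = q.num • ((k : ℚ) • x) := by
      rw [← Int.cast_smul_eq_zsmul ℚ, smul_smul, smul_smul]
      congr 1
      push_cast
      rw [mul_assoc, Rat.den_mul_eq_num, mul_comm]
    rw [hsplit]
    exact S.smul_mem _ hkx

theorem HasSignature.exists_basis_mem {pos neg : ℕ} (hsig : HasSignature B pos neg)
    (hSspan : Submodule.span ℚ (S : Set V) = ⊤) :
    ∃ b : Module.Basis (Fin (pos + neg)) ℚ V, (∀ i, b i ∈ S) ∧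
      (∀ i j, i ≠ j → B (b i) (b j) = 0) ∧
      (Finset.univ.filter fun i => 0 < B (b i) (b i)).card = pos ∧
      (Finset.univ.filter fun i => B (b i) (b i) < 0).card = neg := by
  obtain ⟨b, horth, hpos, hneg⟩ := hsig
  choose k hk hkS using fun i => exists_intCast_smul_mem hSspan (b i)
  have hunit : ∀ i, IsUnit (k i : ℚ) := fun i => (Int.cast_ne_zero.mpr (hk i)).isUnit
  have hnorm : ∀ i, B (b.isUnitSMul hunit i) (b.isUnitSMul hunit i) =
      (k i : ℚ) ^ 2 * B (b i) (b i) := by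
    intro i
    simp only [Module.Basis.isUnitSMul_apply, map_smul, LinearMap.smul_apply, smul_eq_mul]
    ring
  have hsq : ∀ i, 0 < (k i : ℚ) ^ 2 := fun i => pow_two_pos_of_ne_zero (Int.cast_ne_zero.mpr (hk i))
  have hneg_iff : ∀ i, (k i : ℚ) ^ 2 * B (b i) (b i) < 0 ↔ B (b i) (b i) < 0 := fun i => by
    rw [← neg_pos, ← mul_neg, mul_pos_iff_of_pos_left (hsq i), neg_pos]
  refine ⟨b.isUnitSMul hunit, fun i => by rw [Module.Basis.isUnitSMul_apply]; exact hkS i,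
    fun i j hij => ?_, ?_, ?_⟩
  · simp [Module.Basis.isUnitSMul_apply, horth i j hij]
  · simpa only [hnorm, mul_pos_iff_of_pos_left (hsq _)] using hpos
  · simpa only [hnorm, hneg_iff] using hneg

end LatticeVectors

section PrimeIndex

variable {V : Type*} [AddCommGroup V] {S S' : Submodule ℤ V} {p : ℕ} [Fact p.Prime]
  (ψ : (↥S ⧸ S'.comap S.subtype) ≃+ ZMod p)
include ψ

theorem mem_of_zsmul_mem_of_quotient_equiv_zmod {x : V} (hx : x ∈ S) {k : ℤ}
    (hk : (k : ZMod p) ≠ 0) (h : k • x ∈ S') : x ∈ S' := by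
  have hzero : ψ (Submodule.Quotient.mk (k • (⟨x, hx⟩ : S))) = 0 := by
    rw [(Submodule.Quotient.mk_eq_zero _).mpr (show k • (⟨x, hx⟩ : S) ∈ S'.comap S.subtype from h),
      map_zero]
  rw [Submodule.Quotient.mk_smul, map_zsmul, zsmul_eq_mul] at hzero
  have := (mul_eq_zero.mp hzero).resolve_left hk
  rwa [AddEquiv.map_eq_zero_iff, Submodule.Quotient.mk_eq_zero] at this

theorem not_forall_zsmul_mem_of_quotient_equiv_zmod {k : ℤ} (hk : (k : ZMod p) ≠ 0) :
    ¬ ∀ x ∈ S, k • x ∈ S' := by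
  intro h
  obtain ⟨⟨x, hx⟩, hx1⟩ := Submodule.Quotient.mk_surjective _ (ψ.symm 1)
  have hxS' : x ∈ S' := mem_of_zsmul_mem_of_quotient_equiv_zmod ψ hx hk (h x hx)
  have : ψ.symm 1 = 0 := by rw [← hx1]; exact (Submodule.Quotient.mk_eq_zero _).mpr hxS'
  simp at this

end PrimeIndex

section StableOrthogonalGroup

variable {V : Type*} [AddCommGroup V] [Module ℚ V] (B : LinearMap.BilinForm ℚ V)

def stableOrthogonalGroup (M : Submodule ℤ V) : Subgroup (V ≃ₗ[ℚ] V) where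
  carrier := {g | MemOStar B M g}
  one_mem' := ⟨fun _ _ => rfl, fun _ => Iff.rfl, fun v _ => by simp⟩
  mul_mem' := by
    rintro g h ⟨hg_iso, hg_mem, hg_dual⟩ ⟨hh_iso, hh_mem, hh_dual⟩
    refine ⟨fun x y => (hg_iso _ _).trans (hh_iso x y),
      fun x => (hh_mem x).trans (hg_mem (h x)), fun v hv => ?_⟩
    have hsplit : (g * h) v - v = g (h v - v) + (g v - v) := by
      simp only [LinearEquiv.mul_apply, map_sub]; abel
    rw [hsplit]
    exact M.add_mem ((hg_mem _).mp (hh_dual v hv)) (hg_dual v hv)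
  inv_mem' := by
    rintro g ⟨hg_iso, hg_mem, hg_dual⟩
    have hinv : ∀ x, g (g⁻¹ x) = x := fun x => g.apply_symm_apply x
    refine ⟨fun x y => by rw [← hg_iso, hinv, hinv], fun x => by rw [hg_mem (g⁻¹ x), hinv], ?_⟩
    intro v hv
    have hdual : InDual B M (g⁻¹ v) := fun y hy => by
      rw [← hg_iso, hinv]; exact hv _ ((hg_mem y).mp hy)
    have := M.neg_mem (hg_dual _ hdual)
    rwa [hinv, neg_sub] at this

variable {B}

theorem mem_stableOrthogonalGroup_of_sub_mem {M : Submodule ℤ V}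
    (hMint : ∀ x ∈ M, InDual B M x) {g : V ≃ₗ[ℚ] V} (hg_iso : ∀ x y, B (g x) (g y) = B x y)
    (hg : ∀ v, InDual B M v → g v - v ∈ M) (hg_inv : ∀ v, InDual B M v → g.symm v - v ∈ M) :
    g ∈ stableOrthogonalGroup B M := by
  have hmaps : ∀ (h : V ≃ₗ[ℚ] V), (∀ v, InDual B M v → h v - v ∈ M) → ∀ x ∈ M, h x ∈ M :=
    fun h hh x hx => by simpa using M.add_mem hx (hh x (hMint x hx))
  refine ⟨hg_iso, fun x => ⟨hmaps g hg x, fun hx => ?_⟩, hg⟩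
  simpa using hmaps g.symm hg_inv _ hx

theorem sub_mem_of_mem_stableOrthogonalGroup {S S' : Submodule ℤ V}
    (hSint : ∀ x ∈ S, ∀ y ∈ S, ∃ n : ℤ, B x y = n) (hS'S : S' ≤ S)
    {g : V ≃ₗ[ℚ] V} (hg : g ∈ stableOrthogonalGroup B S') {v : V} (hv : v ∈ S) :
    g v - v ∈ S' :=
  hg.2.2 v fun y hy => hSint v hv y (hS'S hy)

end StableOrthogonalGroup

section Cosets

variable {V : Type*} [AddCommGroup V] [Module ℚ V] {B : LinearMap.BilinForm ℚ V}

variable (B) in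
/-- `[O(S)* : O(S)* ∩ O(S')*] > N`, witnessed by `N + 1` elements in distinct cosets. -/
def StableIndexGT (S S' : Submodule ℤ V) (N : ℕ) : Prop :=
  ∃ g : Fin (N + 1) → (V ≃ₗ[ℚ] V), (∀ i, g i ∈ stableOrthogonalGroup B S) ∧
    ∀ i j, i ≠ j → (g i)⁻¹ * g j ∉ stableOrthogonalGroup B S'

theorem stableIndexGT_of_pow {S S' : Submodule ℤ V}
    (hSint : ∀ x ∈ S, ∀ y ∈ S, ∃ n : ℤ, B x y = n) (hS'S : S' ≤ S) {N : ℕ}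
    {g : V ≃ₗ[ℚ] V} (hg : g ∈ stableOrthogonalGroup B S)
    (hpow : ∀ m : ℕ, 0 < m → m ≤ N → ∃ v ∈ S, (g ^ m) v - v ∉ S') :
    StableIndexGT B S S' N := by
  have hlt : ∀ i j : Fin (N + 1), i < j →
      (g ^ (i : ℕ))⁻¹ * g ^ (j : ℕ) ∉ stableOrthogonalGroup B S' := by
    intro i j hij hmem
    have hdiff : (g ^ (i : ℕ))⁻¹ * g ^ (j : ℕ) = g ^ ((j : ℕ) - i) := by
      rw [inv_mul_eq_iff_eq_mul, ← pow_add, Nat.add_sub_cancel' hij.le]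
    obtain ⟨v, hv, hmove⟩ := hpow ((j : ℕ) - i) (by omega) (by omega)
    exact hmove (sub_mem_of_mem_stableOrthogonalGroup hSint hS'S (hdiff ▸ hmem) hv)
  refine ⟨fun i => g ^ (i : ℕ), fun i => pow_mem hg _, fun i j hij => ?_⟩
  rcases lt_or_gt_of_ne hij with h | h
  · exact hlt i j h
  · rw [← inv_mem_iff, mul_inv_rev, inv_inv]
    exact hlt j i h

end Cosets

section Eichler

variable {V : Type*} [AddCommGroup V] [Module ℚ V] (B : LinearMap.BilinForm ℚ V)

def eichler (e a : V) : Module.End ℚ V :=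
  LinearMap.id + (B a).smulRight e - (B e).smulRight a - (B a a / 2) • (B e).smulRight e

theorem eichler_apply (e a x : V) :
    eichler B e a x = x + B a x • e - B e x • a - (B a a / 2 * B e x) • e := by
  simp [eichler, mul_smul]

variable {B} (hBsymm : ∀ x y : V, B x y = B y x) {e : V} (hee : B e e = 0)
include hBsymm hee

theorem eichler_mul {a b : V} (hea : B e a = 0) (heb : B e b = 0) :
    eichler B e a * eichler B e b = eichler B e (a + b) := by
  ext x
  simp only [Module.End.mul_apply, eichler_apply, map_add, map_sub, map_smul,
    LinearMap.add_apply]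
  simp only [hee, hea, heb, hBsymm a e, hBsymm b a]
  match_scalars <;> ring

theorem eichler_pow {a : V} (hea : B e a = 0) (m : ℕ) :
    eichler B e a ^ m = eichler B e ((m : ℚ) • a) := by
  induction m with
  | zero => ext x; simp [eichler_apply]
  | succ m ih =>
    rw [pow_succ, ih, eichler_mul hBsymm hee (by simp [hea]) hea]
    congr 1
    push_cast
    module

theorem eichler_isometry {a : V} (hea : B e a = 0) (x y : V) :
    B (eichler B e a x) (eichler B e a y) = B x y := by
  simp only [eichler_apply, map_add, map_sub, map_smul, LinearMap.add_apply,
    LinearMap.sub_apply, LinearMap.smul_apply, smul_eq_mul]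
  simp only [hBsymm x e, hBsymm x a, hBsymm a e, hee, hea]
  ring

theorem eichler_mul_neg {a : V} (hea : B e a = 0) : eichler B e a * eichler B e (-a) = 1 := by
  rw [eichler_mul hBsymm hee hea (by simp [hea]), add_neg_cancel]
  ext x
  simp [eichler_apply]

def eichlerEquiv (a : V) (hea : B e a = 0) : V ≃ₗ[ℚ] V :=
  .ofLinearMap (eichler B e a) (eichler B e (-a)) (eichler_mul_neg hBsymm hee hea) <| by
    have := eichler_mul_neg hBsymm hee (a := -a) (by simp [hea])
    rwa [neg_neg] at this

theorem eichlerEquiv_pow_apply {a : V} (hea : B e a = 0) (m : ℕ) (x : V) :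
    (eichlerEquiv hBsymm hee a hea ^ m) x = eichler B e ((m : ℚ) • a) x := by
  rw [← eichler_pow hBsymm hee hea, LinearEquiv.pow_apply, Module.End.pow_apply]
  rfl

omit hee in
theorem eichler_sub_mem {S : Submodule ℤ V} (hSeven : ∀ x ∈ S, ∃ n : ℤ, B x x = 2 * n)
    {a : V} (he : e ∈ S) (ha : a ∈ S) {v : V} (hv : InDual B S v) :
    eichler B e a v - v ∈ S := by
  obtain ⟨t, ht⟩ := hv a ha
  obtain ⟨s, hs⟩ := hv e he
  obtain ⟨q, hq⟩ := hSeven a ha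
  have hexpand : eichler B e a v - v = t • e - s • a - (q * s) • e := by
    rw [eichler_apply, hBsymm a v, hBsymm e v, ht, hs, hq]
    simp only [← Int.cast_smul_eq_zsmul ℚ]
    push_cast
    module
  rw [hexpand]
  exact S.sub_mem (S.sub_mem (S.smul_mem _ he) (S.smul_mem _ ha)) (S.smul_mem _ he)

theorem eichlerEquiv_mem {S : Submodule ℤ V} (hSint : ∀ x ∈ S, ∀ y ∈ S, ∃ n : ℤ, B x y = n)
    (hSeven : ∀ x ∈ S, ∃ n : ℤ, B x x = 2 * n) {a : V} (he : e ∈ S) (ha : a ∈ S)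
    (hea : B e a = 0) : eichlerEquiv hBsymm hee a hea ∈ stableOrthogonalGroup B S :=
  mem_stableOrthogonalGroup_of_sub_mem (fun x hx y hy => hSint x hx y hy)
    (eichler_isometry hBsymm hee hea)
    (fun _ hv => eichler_sub_mem hBsymm hSeven he ha hv)
    (fun _ hv => eichler_sub_mem hBsymm hSeven he (S.neg_mem ha) hv)

end Eichler

section EichlerIndex

variable {V : Type*} [AddCommGroup V] [Module ℚ V] {B : LinearMap.BilinForm ℚ V}

theorem eichler_smul_apply_sub_self (c : ℚ) (e a v : V) :
    eichler B e (c • a) v - v =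
      (c * B a v - c ^ 2 * (B a a / 2) * B e v) • e - (c * B e v) • a := by
  simp only [eichler_apply, map_smul, LinearMap.smul_apply, smul_eq_mul]
  module

variable (hBsymm : ∀ x y : V, B x y = B y x) {S S' : Submodule ℤ V}
  (hSint : ∀ x ∈ S, ∀ y ∈ S, ∃ n : ℤ, B x y = n) (hSeven : ∀ x ∈ S, ∃ n : ℤ, B x x = 2 * n)
  (hS'S : S' ≤ S) {p : ℕ} [Fact p.Prime] (ψ : (↥S ⧸ S'.comap S.subtype) ≃+ ZMod p)
  {N : ℕ} (hNp : N < p) {e a : V} (he : e ∈ S) (ha : a ∈ S) (hee : B e e = 0) (hea : B e a = 0)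
include hBsymm hSint hSeven hS'S ψ hNp he ha hee hea

theorem stableIndexGT_of_eichler_of_not_mem {v : V} (hv : v ∈ S) (hev : B e v = 0) {β : ℤ}
    (hβ : B a v = β) (hβ0 : β ≠ 0) (hβp : |β| < p) (he' : e ∉ S') :
    StableIndexGT B S S' N := by
  refine stableIndexGT_of_pow hSint hS'S (eichlerEquiv_mem hBsymm hee hSint hSeven he ha hea)
    fun m hm hmN => ⟨v, hv, fun hmem => he' ?_⟩
  rw [eichlerEquiv_pow_apply, eichler_smul_apply_sub_self, hev, hβ] at hmem
  refine mem_of_zsmul_mem_of_quotient_equiv_zmod ψ he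
    (ZMod.natCast_mul_intCast_ne_zero hm (by omega) hβ0 hβp) ?_
  convert hmem using 1
  rw [← Int.cast_smul_eq_zsmul ℚ]
  push_cast
  module

theorem stableIndexGT_of_eichler_of_mem {f : V} (hf : f ∈ S) {c : ℤ} (hc : B e f = c)
    (hc0 : c ≠ 0) (hcp : |c| < p) (he' : e ∈ S') (ha' : a ∉ S') :
    StableIndexGT B S S' N := by
  refine stableIndexGT_of_pow hSint hS'S (eichlerEquiv_mem hBsymm hee hSint hSeven he ha hea)
    fun m hm hmN => ⟨f, hf, fun hmem => ha' ?_⟩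
  rw [eichlerEquiv_pow_apply, eichler_smul_apply_sub_self, hc] at hmem
  obtain ⟨t, ht⟩ := hSint a ha f hf
  obtain ⟨q, hq⟩ := hSeven a ha
  rw [ht, hq] at hmem
  -- as `e ∈ S'`, the displacement of `f` is `-(m c) a` modulo `S'`
  refine mem_of_zsmul_mem_of_quotient_equiv_zmod ψ ha
    (ZMod.natCast_mul_intCast_ne_zero hm (by omega) hc0 hcp) ?_
  have hcomb := S'.sub_mem (S'.smul_mem ((m : ℤ) * t - (m : ℤ) ^ 2 * q * c) he') hmem
  convert hcomb using 1
  simp only [← Int.cast_smul_eq_zsmul ℚ]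
  push_cast
  module

end EichlerIndex

section Isotropic

variable {V : Type*} [AddCommGroup V] [Module ℚ V] {B : LinearMap.BilinForm ℚ V}
  (hBsymm : ∀ x y : V, B x y = B y x) (hBnd : B.SeparatingLeft) {S : Submodule ℤ V}
  (hSspan : Submodule.span ℚ (S : Set V) = ⊤)
include hBsymm hBnd hSspan

theorem exists_isotropic_mem_pairing_ne_zero {e : V} (he0 : e ≠ 0) (hee : B e e = 0) :
    ∃ f ∈ S, B f f = 0 ∧ B e f ≠ 0 := by
  obtain ⟨y, hy⟩ : ∃ y, B e y ≠ 0 := by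
    by_contra! h
    exact he0 (hBnd e h)
  obtain ⟨k, hk, hkS⟩ := exists_intCast_smul_mem hSspan (y - (B y y / (2 * B e y)) • e)
  refine ⟨_, hkS, ?_, ?_⟩
  · simp only [map_smul, map_sub, LinearMap.smul_apply, LinearMap.sub_apply, smul_eq_mul,
      hBsymm y e, hee]
    field_simp
    ring
  · simpa [hee] using ⟨hk, hy⟩

theorem exists_mem_orthogonal_pairing_ne_zero [FiniteDimensional ℚ V]
    (hdim : 2 < Module.finrank ℚ V) {e f : V} (hee : B e e = 0) (hff : B f f = 0)
    (hef : B e f ≠ 0) :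
    ∃ a ∈ S, ∃ v ∈ S, B e a = 0 ∧ B f a = 0 ∧ B e v = 0 ∧ B f v = 0 ∧ B a v ≠ 0 := by
  obtain ⟨a, haK, ha0⟩ := Submodule.exists_mem_ne_zero_of_ne_bot
    (LinearMap.ker_ne_bot_of_finrank_lt (f := (B e).prod (B f)) (by simpa using hdim))
  simp only [LinearMap.mem_ker, LinearMap.prod_apply, Function.prod, Prod.mk_eq_zero] at haK
  obtain ⟨hea, hfa⟩ := haK
  obtain ⟨z, hz⟩ : ∃ z, B a z ≠ 0 := by
    by_contra! h
    exact ha0 (hBnd a h)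
  obtain ⟨k, hk, hkS⟩ := exists_intCast_smul_mem hSspan a
  -- the projection of `z` to the orthogonal complement of the hyperbolic plane `span {e, f}`
  obtain ⟨l, hl, hlS⟩ := exists_intCast_smul_mem hSspan
    (z - (B f z / B e f) • e - (B e z / B e f) • f)
  refine ⟨_, hkS, _, hlS, by simp [hea], by simp [hfa], ?_, ?_, ?_⟩ <;>
    simp only [map_smul, map_sub, LinearMap.smul_apply, smul_eq_mul, hee, hff, hBsymm f e,
      hBsymm a e, hBsymm a f, hea, hfa]
  · field_simp
    ring
  · field_simp
    ring
  · simpa using ⟨hl, hk, hz⟩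

end Isotropic

theorem zsmul_mem_of_forall_orthogonal_mem {V : Type*} [AddCommGroup V] [Module ℚ V]
    {B : LinearMap.BilinForm ℚ V} {S S' : Submodule ℤ V}
    (hSint : ∀ x ∈ S, ∀ y ∈ S, ∃ n : ℤ, B x y = n) {e f : V} (he : e ∈ S) (hf : f ∈ S)
    (hf' : f ∈ S') {c : ℤ} (hc : B e f = c) (horth : ∀ a ∈ S, B e a = 0 → a ∈ S') {x : V}
    (hx : x ∈ S) : c • x ∈ S' := by
  obtain ⟨n, hn⟩ := hSint e he x hx
  have hproj : c • x - n • f ∈ S' := horth _ (S.sub_mem (S.smul_mem c hx) (S.smul_mem n hf)) (by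
    simp only [← Int.cast_smul_eq_zsmul ℚ, map_sub, map_smul, smul_eq_mul, hn, hc]
    ring)
  simpa using S'.add_mem hproj (S'.smul_mem n hf')

theorem exists_bound_stableIndexGT_of_isotropic {V : Type*} [AddCommGroup V] [Module ℚ V]
    {B : LinearMap.BilinForm ℚ V} (hBsymm : ∀ x y : V, B x y = B y x) (hBnd : B.SeparatingLeft)
    {S : Submodule ℤ V} (hSspan : Submodule.span ℚ (S : Set V) = ⊤)
    (hSint : ∀ x ∈ S, ∀ y ∈ S, ∃ n : ℤ, B x y = n) (hSeven : ∀ x ∈ S, ∃ n : ℤ, B x x = 2 * n)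
    [FiniteDimensional ℚ V] (hdim : 2 < Module.finrank ℚ V) {e : V} (he : e ∈ S) (he0 : e ≠ 0)
    (hee : B e e = 0) (N : ℕ) :
    ∃ P : ℕ, ∀ p : ℕ, p.Prime → P ≤ p → ∀ S' : Submodule ℤ V, S' ≤ S →
      Nonempty ((↥S ⧸ S'.comap S.subtype) ≃+ ZMod p) → StableIndexGT B S S' N := by
  obtain ⟨f, hf, hff, hef⟩ := exists_isotropic_mem_pairing_ne_zero hBsymm hBnd hSspan he0 hee
  obtain ⟨a, ha, v, hv, hea, hfa, hev, hfv, hav⟩ :=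
    exists_mem_orthogonal_pairing_ne_zero hBsymm hBnd hSspan hdim hee hff hef
  obtain ⟨c, hc⟩ := hSint e he f hf
  obtain ⟨β, hβ⟩ := hSint a ha v hv
  have hc0 : c ≠ 0 := by rintro rfl; exact hef (by simpa using hc)
  have hβ0 : β ≠ 0 := by rintro rfl; exact hav (by simpa using hβ)
  refine ⟨N + c.natAbs + β.natAbs + 1, fun p hp hPp S' hS'S ⟨ψ⟩ => ?_⟩
  have : Fact p.Prime := ⟨hp⟩
  have hNp : N < p := by omega
  have hcp : |c| < p := by rw [Int.abs_eq_natAbs]; exact_mod_cast (by omega : c.natAbs < p)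
  have hβp : |β| < p := by rw [Int.abs_eq_natAbs]; exact_mod_cast (by omega : β.natAbs < p)
  by_cases he' : e ∈ S'
  swap
  · exact stableIndexGT_of_eichler_of_not_mem hBsymm hSint hSeven hS'S ψ hNp he ha hee hea hv hev
      hβ hβ0 hβp he'
  by_cases hf' : f ∈ S'
  swap
  · exact stableIndexGT_of_eichler_of_not_mem hBsymm hSint hSeven hS'S ψ hNp hf ha hff hfa hv hfv
      hβ hβ0 hβp hf'
  by_cases horth : ∃ a' ∈ S, B e a' = 0 ∧ a' ∉ S'
  · obtain ⟨a', ha', hea', ha''⟩ := horth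
    exact stableIndexGT_of_eichler_of_mem hBsymm hSint hSeven hS'S ψ hNp he ha' hee hea' hf hc
      hc0 hcp he' ha''
  push Not at horth
  exact (not_forall_zsmul_mem_of_quotient_equiv_zmod ψ (ZMod.intCast_ne_zero_of_abs_lt hc0 hcp)
    fun x hx => zsmul_mem_of_forall_orthogonal_mem hSint he hf hf' hc horth hx).elim

theorem Pell.Solution₁.exists_pos_congr_one {d : ℤ} (h₀ : 0 < d) (hd : ¬IsSquare d) (n : ℕ)
    [NeZero n] :
    ∃ ζ : Pell.Solution₁ d, 0 < ζ.x ∧ 0 < ζ.y ∧ (ζ.x : ZMod n) = 1 ∧ (ζ.y : ZMod n) = 0 := by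
  obtain ⟨z, hzx, hzy⟩ := exists_pos_of_not_isSquare h₀ hd
  obtain ⟨k, l, hkl, heq⟩ := Set.finite_univ.exists_lt_map_eq_of_forall_mem
    (f := fun k : ℕ => (((z ^ k).x : ZMod n), ((z ^ k).y : ZMod n))) fun _ => Set.mem_univ _
  obtain ⟨j, rfl⟩ : ∃ j, l = k + (j + 1) := ⟨l - k - 1, by omega⟩
  simp only [Prod.mk.injEq] at heq
  have hsplit : z ^ (j + 1) = (z ^ k)⁻¹ * z ^ (k + (j + 1)) := by
    rw [pow_add z k, inv_mul_cancel_left]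
  have hprop := congrArg (fun t : ℤ => (t : ZMod n)) (z ^ k).prop
  refine ⟨z ^ (j + 1), x_pow_pos (by omega) _, y_pow_succ_pos (by omega) hzy _, ?_, ?_⟩ <;>
    rw [hsplit] <;> simp only [x_mul, y_mul, x_inv, y_inv] <;> push_cast at hprop ⊢ <;>
    rw [← heq.1, ← heq.2]
  · linear_combination hprop
  · ring

section PlaneRotation

variable {V : Type*} [AddCommGroup V] [Module ℚ V] (B : LinearMap.BilinForm ℚ V) (u w : V)
  (A C : ℤ)

/-- For `B(u,u) = 2A`, `B(w,w) = 2C`, `u ⊥ w`, the isometry of `span {u, w}` attached to the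
Pell unit `ζ = x + y √(-AC)`, namely `u ↦ x u + A y w`, `w ↦ -C y u + x w`, extended by the
identity on the orthogonal complement of the plane. -/
def planeRotation (ζ : Pell.Solution₁ (-(A * C))) : Module.End ℚ V :=
  LinearMap.id + ((2 * A : ℚ)⁻¹ • B u).smulRight ((ζ.x - 1 : ℚ) • u + (A * ζ.y : ℚ) • w)
    + ((2 * C : ℚ)⁻¹ • B w).smulRight ((-C * ζ.y : ℚ) • u + (ζ.x - 1 : ℚ) • w)

variable {u w A C}

theorem planeRotation_apply (ζ : Pell.Solution₁ (-(A * C))) (x : V) :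
    planeRotation B u w A C ζ x = x + (B u x / (2 * A)) • ((ζ.x - 1 : ℚ) • u + (A * ζ.y : ℚ) • w)
      + (B w x / (2 * C)) • ((-C * ζ.y : ℚ) • u + (ζ.x - 1 : ℚ) • w) := by
  simp [planeRotation, div_eq_inv_mul]

theorem planeRotation_one : planeRotation B u w A C 1 = 1 := by
  ext x; simp [planeRotation_apply]

variable {B} (hBsymm : ∀ x y : V, B x y = B y x) (hA : A ≠ 0) (hC : C ≠ 0)
  (huu : B u u = 2 * A) (hww : B w w = 2 * C) (huw : B u w = 0)
include hBsymm hA hC huu hww huw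

theorem planeRotation_mul (ζ η : Pell.Solution₁ (-(A * C))) :
    planeRotation B u w A C (ζ * η) = planeRotation B u w A C ζ * planeRotation B u w A C η := by
  have hwu : B w u = 0 := by rw [hBsymm, huw]
  ext x
  simp only [Module.End.mul_apply, planeRotation_apply, Pell.Solution₁.x_mul,
    Pell.Solution₁.y_mul, map_add, map_smul, huu, hww, huw, hwu]
  push_cast
  match_scalars <;> field_simp <;> ring

theorem planeRotation_isometry (ζ : Pell.Solution₁ (-(A * C))) (x y : V) :
    B (planeRotation B u w A C ζ x) (planeRotation B u w A C ζ y) = B x y := by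
  have hwu : B w u = 0 := by rw [hBsymm, huw]
  have hprop : (ζ.x : ℚ) ^ 2 + A * C * ζ.y ^ 2 = 1 := by
    exact_mod_cast (by linear_combination ζ.prop : ζ.x ^ 2 + A * C * ζ.y ^ 2 = 1)
  simp only [planeRotation_apply, map_add, map_smul, LinearMap.add_apply, LinearMap.smul_apply,
    smul_eq_mul, huu, hww, huw, hwu, hBsymm x u, hBsymm x w]
  field_simp
  linear_combination 2 * (A * B w x * B w y + C * B u x * B u y) * hprop

end PlaneRotation

section PlaneRotationIndex

variable {V : Type*} [AddCommGroup V] [Module ℚ V] {B : LinearMap.BilinForm ℚ V} {u w : V}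
  {A C : ℤ} (hBsymm : ∀ x y : V, B x y = B y x) (hA : A ≠ 0) (hC : C ≠ 0)
  (huu : B u u = 2 * A) (hww : B w w = 2 * C) (huw : B u w = 0)
include hBsymm hA hC huu hww huw

theorem planeRotation_pow (ζ : Pell.Solution₁ (-(A * C))) (m : ℕ) :
    planeRotation B u w A C (ζ ^ m) = planeRotation B u w A C ζ ^ m := by
  induction m with
  | zero => exact planeRotation_one B
  | succ m ih => rw [pow_succ, pow_succ, planeRotation_mul hBsymm hA hC huu hww huw, ih]

def planeRotationEquiv (ζ : Pell.Solution₁ (-(A * C))) : V ≃ₗ[ℚ] V :=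
  .ofLinearMap (planeRotation B u w A C ζ) (planeRotation B u w A C ζ⁻¹)
    ((planeRotation_mul hBsymm hA hC huu hww huw ζ ζ⁻¹).symm.trans
      (by rw [mul_inv_cancel, planeRotation_one]; rfl))
    ((planeRotation_mul hBsymm hA hC huu hww huw ζ⁻¹ ζ).symm.trans
      (by rw [inv_mul_cancel, planeRotation_one]; rfl))

theorem planeRotationEquiv_pow_apply (ζ : Pell.Solution₁ (-(A * C))) (m : ℕ) (x : V) :
    (planeRotationEquiv hBsymm hA hC huu hww huw ζ ^ m) x = planeRotation B u w A C (ζ ^ m) x := by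
  rw [planeRotation_pow hBsymm hA hC huu hww huw, LinearEquiv.pow_apply, Module.End.pow_apply]
  rfl

/-- Cramer's rule for `R_ζ - 1` on the plane, whose determinant is `(x - 1)² + A C y² = 2 - 2x`. -/
theorem two_sub_two_x_zsmul_eq_planeRotation (ζ : Pell.Solution₁ (-(A * C))) :
    (2 - 2 * ζ.x) • u = (ζ.x - 1) • (planeRotation B u w A C ζ u - u)
      - (A * ζ.y) • (planeRotation B u w A C ζ w - w) := by
  have hwu : B w u = 0 := by rw [hBsymm, huw]
  have hprop : (ζ.x : ℚ) ^ 2 + A * C * ζ.y ^ 2 = 1 := by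
    exact_mod_cast (by linear_combination ζ.prop : ζ.x ^ 2 + A * C * ζ.y ^ 2 = 1)
  simp only [← Int.cast_smul_eq_zsmul ℚ, planeRotation_apply, huu, hww, huw, hwu]
  push_cast
  match_scalars <;> field_simp
  · linear_combination (-2) * hprop
  · ring

omit huu hww huw in
theorem planeRotation_sub_mem {S : Submodule ℤ V} (hu : u ∈ S) (hw : w ∈ S)
    {ζ : Pell.Solution₁ (-(A * C))} (hxA : 2 * A ∣ ζ.x - 1) (hxC : 2 * C ∣ ζ.x - 1)
    (hy : 2 ∣ ζ.y) {v : V} (hv : InDual B S v) : planeRotation B u w A C ζ v - v ∈ S := by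
  obtain ⟨s, hs⟩ := hv u hu
  obtain ⟨t, ht⟩ := hv w hw
  obtain ⟨k, hk⟩ := hxA
  obtain ⟨k', hk'⟩ := hxC
  obtain ⟨l, hl⟩ := hy
  have hexpand : planeRotation B u w A C ζ v - v = (s * k - t * l) • u + (s * l + t * k') • w := by
    have hkQ : (ζ.x : ℚ) - 1 = 2 * A * k := by exact_mod_cast hk
    have hk'Q : (ζ.x : ℚ) - 1 = 2 * C * k' := by exact_mod_cast hk'
    rw [planeRotation_apply, hBsymm u v, hBsymm w v, hs, ht]
    simp only [← Int.cast_smul_eq_zsmul ℚ, hl]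
    push_cast
    match_scalars <;> field_simp
    · ring
    · linear_combination (s : ℚ) * hkQ
    · linear_combination (t : ℚ) * hk'Q
  rw [hexpand]
  exact S.add_mem (S.smul_mem _ hu) (S.smul_mem _ hw)

theorem planeRotationEquiv_mem {S : Submodule ℤ V}
    (hSint : ∀ x ∈ S, ∀ y ∈ S, ∃ n : ℤ, B x y = n) (hu : u ∈ S) (hw : w ∈ S)
    {ζ : Pell.Solution₁ (-(A * C))} (hxA : 2 * A ∣ ζ.x - 1) (hxC : 2 * C ∣ ζ.x - 1)
    (hy : 2 ∣ ζ.y) : planeRotationEquiv hBsymm hA hC huu hww huw ζ ∈ stableOrthogonalGroup B S :=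
  mem_stableOrthogonalGroup_of_sub_mem (fun x hx y hy => hSint x hx y hy)
    (planeRotation_isometry hBsymm hA hC huu hww huw ζ)
    (fun _ hv => planeRotation_sub_mem hBsymm hA hC hu hw hxA hxC hy hv)
    (fun _ hv => planeRotation_sub_mem hBsymm hA hC hu hw (by rwa [Pell.Solution₁.x_inv])
      (by rwa [Pell.Solution₁.x_inv]) (by rwa [Pell.Solution₁.y_inv, dvd_neg]) hv)

end PlaneRotationIndex

theorem exists_bound_stableIndexGT_of_plane {V : Type*} [AddCommGroup V] [Module ℚ V]
    {B : LinearMap.BilinForm ℚ V} (hBsymm : ∀ x y : V, B x y = B y x) {S : Submodule ℤ V}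
    (hSint : ∀ x ∈ S, ∀ y ∈ S, ∃ n : ℤ, B x y = n) {u w : V} (hu : u ∈ S) (hw : w ∈ S)
    {A C : ℤ} (huu : B u u = 2 * A) (hww : B w w = 2 * C) (huw : B u w = 0)
    (hd : 0 < -(A * C)) (hsq : ¬IsSquare (-(A * C))) (N : ℕ) :
    ∃ P : ℕ, ∀ p : ℕ, p.Prime → P ≤ p → ∀ S' : Submodule ℤ V, S' ≤ S →
      Nonempty ((↥S ⧸ S'.comap S.subtype) ≃+ ZMod p) → u ∉ S' → StableIndexGT B S S' N := by
  have hA : A ≠ 0 := by rintro rfl; simp at hd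
  have hC : C ≠ 0 := by rintro rfl; simp at hd
  have : NeZero (2 * A * C).natAbs := ⟨by simp [hA, hC]⟩
  obtain ⟨ζ, hζx, hζy, hx1, hy0⟩ := Pell.Solution₁.exists_pos_congr_one hd hsq (2 * A * C).natAbs
  rw [← sub_eq_zero, ← Int.cast_one, ← Int.cast_sub, ZMod.intCast_zmod_eq_zero_iff_dvd,
    Int.natCast_natAbs, abs_dvd] at hx1
  rw [ZMod.intCast_zmod_eq_zero_iff_dvd, Int.natCast_natAbs, abs_dvd] at hy0
  have hg := planeRotationEquiv_mem hBsymm hA hC huu hww huw hSint hu hw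
    (dvd_trans ⟨C, by ring⟩ hx1) (dvd_trans ⟨A, by ring⟩ hx1) (dvd_trans ⟨A * C, by ring⟩ hy0)
  refine ⟨(Finset.range (N + 1)).sup (fun m => (2 - 2 * (ζ ^ m).x).natAbs) + 1, ?_⟩
  rintro p hp hPp S' hS'S ⟨ψ⟩ hu'
  have : Fact p.Prime := ⟨hp⟩
  refine stableIndexGT_of_pow hSint hS'S hg fun m hm hmN => ?_
  by_contra! hfix
  have hxm : (ζ ^ m).x ≠ 1 := fun h => by
    have hpos := Pell.Solution₁.y_pow_succ_pos hζx hζy (m - 1)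
    rw [Nat.succ_eq_add_one, Nat.sub_add_cancel hm,
      Pell.Solution₁.eq_one_of_x_eq_one hd.ne' h] at hpos
    simp at hpos
  have hbound : |2 - 2 * (ζ ^ m).x| < p := by
    have := Finset.le_sup (f := fun m => (2 - 2 * (ζ ^ m).x).natAbs)
      (Finset.mem_range.mpr (by omega : m < N + 1))
    rw [Int.abs_eq_natAbs]
    exact_mod_cast (by omega : (2 - 2 * (ζ ^ m).x).natAbs < p)
  refine hu' (mem_of_zsmul_mem_of_quotient_equiv_zmod ψ hu
    (ZMod.intCast_ne_zero_of_abs_lt (by omega) hbound) ?_)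
  rw [two_sub_two_x_zsmul_eq_planeRotation hBsymm hA hC huu hww huw]
  simp only [← planeRotationEquiv_pow_apply hBsymm hA hC huu hww huw]
  exact S'.sub_mem (S'.smul_mem _ (hfix u hu)) (S'.smul_mem _ (hfix w hw))

section Anisotropic

variable {V : Type*} [AddCommGroup V] [Module ℚ V] {B : LinearMap.BilinForm ℚ V}

theorem prod_zsmul_mem_span_of_orthogonal {ι : Type*} [Fintype ι] [DecidableEq ι]
    (b : Module.Basis ι ℚ V) (horth : ∀ i j, i ≠ j → B (b i) (b j) = 0) {g : ι → ℤ}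
    (hg : ∀ i, B (b i) (b i) = g i) (hg0 : ∀ i, g i ≠ 0) {x : V}
    (hx : ∀ i, ∃ n : ℤ, B (b i) x = n) :
    (∏ i, g i) • x ∈ Submodule.span ℤ (Set.range b) := by
  have hcoord : ∀ i, B (b i) x = b.repr x i * g i := by
    intro i
    conv_lhs => rw [← b.sum_repr x]
    rw [map_sum, Finset.sum_eq_single i (fun j _ hji => by rw [map_smul, horth i j hji.symm,
      smul_zero]) (by simp), map_smul, smul_eq_mul, hg]
  rw [← b.sum_repr x, Finset.smul_sum]
  refine Submodule.sum_mem _ fun i _ => ?_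
  obtain ⟨n, hn⟩ := hx i
  have hrepr : b.repr x i = n / g i := by
    rw [eq_div_iff (Int.cast_ne_zero.mpr (hg0 i)), ← hcoord, hn]
  have hint : (∏ j, g j) • (b.repr x i • b i) = (n * ∏ j ∈ Finset.univ.erase i, g j) • b i := by
    rw [← Finset.mul_prod_erase _ _ (Finset.mem_univ i), ← Int.cast_smul_eq_zsmul ℚ,
      ← Int.cast_smul_eq_zsmul ℚ, smul_smul, hrepr]
    congr 1
    push_cast
    field_simp [Int.cast_ne_zero.mpr (hg0 i)]
  rw [hint]
  exact Submodule.smul_mem _ _ (Submodule.subset_span ⟨i, rfl⟩)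

theorem not_isSquare_of_anisotropic (hBsymm : ∀ x y : V, B x y = B y x) {S : Submodule ℤ V}
    (haniso : ∀ e ∈ S, B e e = 0 → e = 0) {u w : V} (hu : u ∈ S) (hw : w ∈ S) {A C : ℤ}
    (hA : A ≠ 0) (hC : C ≠ 0) (huu : B u u = 2 * A) (hww : B w w = 2 * C) (huw : B u w = 0) :
    ¬IsSquare (-(A * C)) := by
  rintro ⟨r, hr⟩
  have hwu : B w u = 0 := by rw [hBsymm, huw]
  have hrQ : -((A : ℚ) * C) = r * r := by exact_mod_cast hr
  have he : (r : ℚ) • u + (A : ℚ) • w ∈ S := by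
    simp only [Int.cast_smul_eq_zsmul]
    exact S.add_mem (S.smul_mem _ hu) (S.smul_mem _ hw)
  have hzero := haniso _ he (by
    simp only [map_add, map_smul, LinearMap.add_apply, LinearMap.smul_apply, smul_eq_mul,
      huu, hww, huw, hwu]
    linear_combination (-2) * (A : ℚ) * hrQ)
  have hpair := congrArg (fun y => B y w) hzero
  simp only [map_add, map_smul, LinearMap.add_apply, LinearMap.smul_apply, smul_eq_mul, hww, huw,
    map_zero, LinearMap.zero_apply] at hpair
  simp [hA, hC] at hpair

end Anisotropic

theorem exists_bound_stableIndexGT_of_anisotropic_plane {V : Type*} [AddCommGroup V]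
    [Module ℚ V] {B : LinearMap.BilinForm ℚ V} (hBsymm : ∀ x y : V, B x y = B y x)
    {S : Submodule ℤ V} (hSint : ∀ x ∈ S, ∀ y ∈ S, ∃ n : ℤ, B x y = n)
    (hSeven : ∀ x ∈ S, ∃ n : ℤ, B x x = 2 * n) (haniso : ∀ e ∈ S, B e e = 0 → e = 0) {u w : V}
    (hu : u ∈ S) (hw : w ∈ S) (huw : B u w = 0) (hsign : B u u * B w w < 0) (N : ℕ) :
    ∃ P : ℕ, ∀ p : ℕ, p.Prime → P ≤ p → ∀ S' : Submodule ℤ V, S' ≤ S →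
      Nonempty ((↥S ⧸ S'.comap S.subtype) ≃+ ZMod p) → u ∉ S' → StableIndexGT B S S' N := by
  obtain ⟨A, huu⟩ := hSeven u hu
  obtain ⟨C, hww⟩ := hSeven w hw
  have hAC : A * C < 0 := by
    rw [huu, hww] at hsign
    exact_mod_cast (by nlinarith : (A : ℚ) * C < 0)
  exact exists_bound_stableIndexGT_of_plane hBsymm hSint hu hw huu hww huw (by linarith)
    (not_isSquare_of_anisotropic hBsymm haniso hu hw (left_ne_zero_of_mul hAC.ne)
      (right_ne_zero_of_mul hAC.ne) huu hww huw) N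

theorem exists_bound_stableIndexGT_of_anisotropic {V : Type*} [AddCommGroup V] [Module ℚ V]
    {B : LinearMap.BilinForm ℚ V} (hBsymm : ∀ x y : V, B x y = B y x) {S : Submodule ℤ V}
    (hSint : ∀ x ∈ S, ∀ y ∈ S, ∃ n : ℤ, B x y = n) (hSeven : ∀ x ∈ S, ∃ n : ℤ, B x x = 2 * n)
    (haniso : ∀ e ∈ S, B e e = 0 → e = 0) {ι : Type*} [Fintype ι] [DecidableEq ι]
    (b : Module.Basis ι ℚ V) (hbS : ∀ i, b i ∈ S) (horth : ∀ i j, i ≠ j → B (b i) (b j) = 0)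
    (hpos : ∃ i, 0 < B (b i) (b i)) (hneg : ∃ i, B (b i) (b i) < 0) (N : ℕ) :
    ∃ P : ℕ, ∀ p : ℕ, p.Prime → P ≤ p → ∀ S' : Submodule ℤ V, S' ≤ S →
      Nonempty ((↥S ⧸ S'.comap S.subtype) ≃+ ZMod p) → StableIndexGT B S S' N := by
  have hnorm0 : ∀ i, B (b i) (b i) ≠ 0 := fun i h => b.ne_zero i (haniso _ (hbS i) h)
  have hpartner : ∀ i, ∃ j, B (b i) (b i) * B (b j) (b j) < 0 := by
    obtain ⟨iPos, hiPos⟩ := hpos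
    obtain ⟨iNeg, hiNeg⟩ := hneg
    intro i
    rcases (hnorm0 i).lt_or_gt with h | h
    · exact ⟨iPos, mul_neg_of_neg_of_pos h hiPos⟩
    · exact ⟨iNeg, mul_neg_of_pos_of_neg h hiNeg⟩
  choose j hj using hpartner
  have hij : ∀ i, i ≠ j i := fun i h => by
    have := hj i
    rw [← h] at this
    nlinarith
  choose P hP using fun i => exists_bound_stableIndexGT_of_anisotropic_plane hBsymm hSint hSeven
    haniso (hbS i) (hbS (j i)) (horth i (j i) (hij i)) (hj i) N
  choose g hg using fun i => hSint (b i) (hbS i) (b i) (hbS i)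
  have hg0 : ∀ i, g i ≠ 0 := fun i h => hnorm0 i (by rw [hg, h, Int.cast_zero])
  set D := ∏ i, g i
  refine ⟨Finset.univ.sup P + D.natAbs + 1, fun p hp hPp S' hS'S ⟨ψ⟩ => ?_⟩
  have : Fact p.Prime := ⟨hp⟩
  by_cases hb' : ∃ i, b i ∉ S'
  · obtain ⟨i, hi⟩ := hb'
    exact hP i p hp (le_trans (by have := Finset.le_sup (f := P) (Finset.mem_univ i); omega) hPp)
      S' hS'S ⟨ψ⟩ hi
  simp only [not_exists, not_not] at hb'
  have hD : ((D : ℤ) : ZMod p) ≠ 0 := ZMod.intCast_ne_zero_of_abs_lt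
    (Finset.prod_ne_zero_iff.mpr fun i _ => hg0 i)
    (by rw [Int.abs_eq_natAbs]; exact_mod_cast (by omega : D.natAbs < p))
  refine ((not_forall_zsmul_mem_of_quotient_equiv_zmod ψ hD) fun x hx => ?_).elim
  exact Submodule.span_le.mpr (Set.range_subset_iff.mpr hb')
    (prod_zsmul_mem_span_of_orthogonal b horth hg hg0 fun i => hSint _ (hbS i) x hx)

theorem index_of_stable_group_of_index_p_sublattice_grows_general
    {V : Type*} [AddCommGroup V] [Module ℚ V]
    (B : LinearMap.BilinForm ℚ V)
    (hBsymm : ∀ x y : V, B x y = B y x) (hBnd : LinearMap.SeparatingLeft B)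
    (S : Submodule ℤ V)
    -- `S` is an even lattice of signature `(2, n)` with `n ≥ 1`:
    (hSspan : Submodule.span ℚ (S : Set V) = ⊤)
    (hSint : ∀ x ∈ S, ∀ y ∈ S, ∃ n : ℤ, B x y = (n : ℚ))
    (hSeven : ∀ x ∈ S, ∃ n : ℤ, B x x = 2 * (n : ℚ))
    (n : ℕ) (hn : 1 ≤ n) (hsig : HasSignature B 2 n) :
    ∀ N : ℕ, 0 < N → ∃ P : ℕ, ∀ p : ℕ, p.Prime → P ≤ p →
      ∀ S' : Submodule ℤ V, S' ≤ S →
        Nonempty ((↥S ⧸ S'.comap S.subtype) ≃+ ZMod p) →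
        ∃ g : Fin (N + 1) → (V ≃ₗ[ℚ] V),
          (∀ i, MemOStar B S (g i)) ∧
          ∀ i j, i ≠ j → ¬ MemOStar B S' ((g i)⁻¹ * (g j)) := by
  intro N _
  obtain ⟨b, hbS, horth, hpos, hneg⟩ := hsig.exists_basis_mem hSspan
  have : FiniteDimensional ℚ V := b.finiteDimensional_of_finite
  by_cases hiso : ∃ e ∈ S, e ≠ 0 ∧ B e e = 0
  · obtain ⟨e, he, he0, hee⟩ := hiso
    have hdim : 2 < Module.finrank ℚ V := by simp [Module.finrank_eq_card_basis b]; omega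
    exact exists_bound_stableIndexGT_of_isotropic hBsymm hBnd hSspan hSint hSeven hdim he he0 hee N
  push Not at hiso
  obtain ⟨iPos, hiPos⟩ := Finset.card_pos.mp (hpos ▸ two_pos)
  obtain ⟨iNeg, hiNeg⟩ := Finset.card_pos.mp (hneg ▸ hn)
  exact exists_bound_stableIndexGT_of_anisotropic hBsymm hSint hSeven
    (fun e he hee => by_contra fun he0 => hiso e he he0 hee) b hbS horth
    ⟨iPos, (Finset.mem_filter.mp hiPos).2⟩ ⟨iNeg, (Finset.mem_filter.mp hiNeg).2⟩ N

/-- Let `S` be an even lattice of signature `(2₊, n₋)`, `n ≥ 1`.  For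
every `N > 0` there is `P` such that for every prime `p ≥ P` and every sublattice
`S' ≤ S` with `S/S' ≅ ℤ/pℤ`, the index of `O(S')*` in `O(S)*` is strictly greater than
`N`: there are `N + 1` elements of `O(S)*` lying in pairwise distinct `O(S')*`-cosets. -/
theorem index_of_stable_group_of_index_p_sublattice_grows
    {V : Type*} [AddCommGroup V] [Module ℚ V]
    (B : LinearMap.BilinForm ℚ V)
    (hBsymm : ∀ x y : V, B x y = B y x) (hBnd : LinearMap.SeparatingLeft B)
    (S : Submodule ℤ V)
    -- `S` is an even lattice of signature `(2, n)` with `n ≥ 1`: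
    (hSfg : S.FG) (hSspan : Submodule.span ℚ (S : Set V) = ⊤)
    (hSint : ∀ x ∈ S, ∀ y ∈ S, ∃ n : ℤ, B x y = (n : ℚ))
    (hSeven : ∀ x ∈ S, ∃ n : ℤ, B x x = 2 * (n : ℚ))
    (n : ℕ) (hn : 1 ≤ n) (hsig : HasSignature B 2 n) :
    ∀ N : ℕ, 0 < N → ∃ P : ℕ, ∀ p : ℕ, p.Prime → P ≤ p →
      ∀ S' : Submodule ℤ V, S' ≤ S →
        Nonempty ((↥S ⧸ S'.comap S.subtype) ≃+ ZMod p) →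
        ∃ g : Fin (N + 1) → (V ≃ₗ[ℚ] V),
          (∀ i, MemOStar B S (g i)) ∧
          ∀ i j, i ≠ j → ¬ MemOStar B S' ((g i)⁻¹ * (g j)) :=
  index_of_stable_group_of_index_p_sublattice_grows_general B hBsymm hBnd S hSspan hSint hSeven n hn
    hsig
end

section
/- Let p be a prime and let T be a free ℤ_p-module of finite rank with a nondegenerate symmetric bilinear form B : T × T → ℤ_p, which is even (B(x,x) ∈ 2ℤ_2 for all x) if p = 2. If ℓ(A_T) < rank(T), then there exists a ℤ_p-linear isometry r of T with r² = id, det(r) = −1, and r acting trivially on the discriminant group, i.e. r(v) − v ∈ T for every v ∈ T^∨. (This is the key step in the proof of Lemma 3.5: it is given by the reflection in a vector x ∈ T with B(x,x) ∈ ℤ_p^× for p odd, respectively B(x,x) ∈ 2·ℤ_2^× for p = 2.) -/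
/-- `v` pairs `ℤ_[p]`-integrally with every element of the `p`-adic lattice `T`, i.e. `v`
belongs to the dual lattice `T^∨` (for a full lattice `T`). -/
def InDualP {p : ℕ} [Fact p.Prime] {V : Type*} [AddCommGroup V] [Module ℚ_[p] V]
    [Module ℤ_[p] V]
    (B : LinearMap.BilinForm ℚ_[p] V) (T : Submodule ℤ_[p] V) (v : V) : Prop :=
  ∀ y ∈ T, ∃ c : ℤ_[p], B v y = (c : ℚ_[p])

lemma det_reflection_aux {K V : Type*} [Field K] [AddCommGroup V] [Module K V]
    [FiniteDimensional K V] {f : Module.Dual K V} {x : V} (h : f x = 2) :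
    LinearMap.det (Module.reflection h : V →ₗ[K] V) = -1 := by
  classical
  let b := Module.finBasis K V
  rw [← LinearMap.det_toMatrix b]
  have hm : LinearMap.toMatrix b b (Module.reflection h : V →ₗ[K] V)
      = 1 + Matrix.replicateCol Unit (fun i => -(b.repr x i)) * Matrix.replicateRow Unit (fun j => f (b j)) := by
    ext i j
    simp [LinearMap.toMatrix_apply, Module.reflection_apply, Matrix.mul_apply,
      Matrix.one_apply, Finsupp.single_apply, sub_eq_add_neg, mul_comm, eq_comm]
  rw [hm, Matrix.det_one_add_replicateCol_mul_replicateRow]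
  have hx : ∑ j, f (b j) * b.repr x j = f x := by
    conv_rhs => rw [← b.sum_repr x]
    rw [map_sum]
    simp [mul_comm]
  simp only [dotProduct, mul_neg]
  rw [Finset.sum_neg_distrib, hx, h]
  ring

lemma not_p_dvd_two {p : ℕ} [Fact p.Prime] (hp : p ≠ 2) : ¬ ((p : ℤ_[p]) ∣ (2 : ℤ_[p])) := by
  intro hdvd
  obtain ⟨c, hc⟩ := hdvd
  have h2 : ((2 : ℕ) : ZMod p) = 0 := by
    have h := congrArg PadicInt.toZMod hc
    rw [map_mul, map_natCast, ZMod.natCast_self, zero_mul] at h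
    rw [← map_natCast (PadicInt.toZMod) 2, show ((2:ℕ):ℤ_[p]) = (2:ℤ_[p]) by norm_cast, h]
  have hpd : p ∣ 2 := (ZMod.natCast_eq_zero_iff 2 p).mp h2
  have := (Nat.prime_dvd_prime_iff_eq (Fact.out : p.Prime) Nat.prime_two).mp hpd
  exact hp this

/-- Let `T` be a (full) `ℤ_p`-lattice in a nondegenerate `p`-adic
quadratic space, even when `p = 2`, with `ℓ(A_T) < rank T`.  Then there is an isometry `r`
of `T` with `r² = id`, `det r = -1`, acting trivially on the discriminant group `A_T`. -/
theorem padic_lattice_has_stable_reflection_of_det_minus_one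
    {p : ℕ} [Fact p.Prime] {V : Type*} [AddCommGroup V] [Module ℚ_[p] V]
    [Module ℤ_[p] V] [IsScalarTower ℤ_[p] ℚ_[p] V]
    (B : LinearMap.BilinForm ℚ_[p] V)
    (hBsymm : ∀ x y : V, B x y = B y x) (hBnd : B.Nondegenerate)
    (T : Submodule ℤ_[p] V)
    -- `T` is a full lattice, integral, and even if `p = 2`:
    (hTfg : T.FG) (hTspan : Submodule.span ℚ_[p] (T : Set V) = ⊤)
    (hTint : ∀ x ∈ T, ∀ y ∈ T, ∃ c : ℤ_[p], B x y = (c : ℚ_[p]))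
    (hTeven : p = 2 → ∀ x ∈ T, ∃ c : ℤ_[p], B x x = 2 * (c : ℚ_[p]))
    -- `ℓ(A_T) < rank T`: the discriminant group `A_T = T^∨/T` is generated by
    -- fewer than `rank T` elements:
    (hlen : ∃ (k : ℕ) (w : Fin k → V), k < Module.finrank ℚ_[p] V ∧
      (∀ i, InDualP B T (w i)) ∧
      ∀ v : V, InDualP B T v → v ∈ T ⊔ Submodule.span ℤ_[p] (Set.range w)) :
    ∃ r : V ≃ₗ[ℚ_[p]] V,
      (∀ x y : V, B (r x) (r y) = B x y) ∧
      (∀ x : V, r (r x) = x) ∧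
      LinearMap.det (r : V →ₗ[ℚ_[p]] V) = -1 ∧
      (∀ x : V, x ∈ T ↔ r x ∈ T) ∧
      (∀ v : V, InDualP B T v → r v - v ∈ T) := by
  classical
  have hpQ : (p : ℚ_[p]) ≠ 0 := Nat.cast_ne_zero.mpr (Fact.out : p.Prime).ne_zero
  have hsm : ∀ (c : ℤ_[p]) (v : V), ((c : ℚ_[p]) • v) = c • v := by
    intro c v
    rw [← PadicInt.algebraMap_apply, algebraMap_smul]
  -- finite dimensionality
  have hfin : FiniteDimensional ℚ_[p] V := by
    obtain ⟨s, hs⟩ := hTfg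
    have hsp : Submodule.span ℚ_[p] (s : Set V) = ⊤ := by
      rw [← hTspan, ← hs, Submodule.span_span_of_tower]
    exact ⟨hsp ▸ Submodule.fg_span s.finite_toSet⟩
  -- existence of a vector with `2/B(x,x)` a unit
  have hex : ∃ x ∈ T, ∃ d : ℤ_[p], IsUnit d ∧ (d : ℚ_[p]) * B x x = 2 := by
    by_contra hcon
    push_neg at hcon
    -- every diagonal value is "divisible": B x y ∈ p ℤ_p for all x y ∈ T
    have hdiv : ∀ x ∈ T, ∀ y ∈ T, ∃ c : ℤ_[p], B x y = (p : ℚ_[p]) * (c : ℚ_[p]) := by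
      rcases eq_or_ne p 2 with hp2 | hp2
      · -- p = 2, even lattice
        have hq : ∀ x ∈ T, ∃ c : ℤ_[p], B x x = 2 * (c : ℚ_[p]) ∧ (p : ℤ_[p]) ∣ c := by
          intro x hx
          obtain ⟨c, hc⟩ := hTeven hp2 x hx
          refine ⟨c, hc, ?_⟩
          by_contra hdvd
          have hu : IsUnit c := by
            rw [← PadicInt.norm_lt_one_iff_dvd] at hdvd
            rw [PadicInt.isUnit_iff]
            have h1 := PadicInt.norm_le_one c
            have h2 := not_lt.mp hdvd
            linarith
          obtain ⟨u, rfl⟩ := hu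
          refine hcon x hx ((u⁻¹ : ℤ_[p]ˣ) : ℤ_[p]) (Units.isUnit _) ?_
          rw [hc]
          have : ((((u⁻¹ : ℤ_[p]ˣ) : ℤ_[p]) : ℚ_[p]) * ((u : ℤ_[p]) : ℚ_[p])) = 1 := by
            rw [← PadicInt.coe_mul]
            norm_cast
            simp
          ring_nf
          rw [mul_comm] at this
          linear_combination 2 * this
        intro x hx y hy
        obtain ⟨c1, hc1, d1, hd1⟩ := hq x hx
        obtain ⟨c2, hc2, d2, hd2⟩ := hq y hy
        obtain ⟨c3, hc3, d3, hd3⟩ := hq (x + y) (add_mem hx hy)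
        obtain ⟨cxy, hcxy⟩ := hTint x hx y hy
        -- B (x+y) (x+y) = B x x + 2 B x y + B y y
        have hexp : (2:ℚ_[p]) * (c3:ℚ_[p]) = 2 * (c1:ℚ_[p]) + 2 * (cxy:ℚ_[p]) + 2 * (c2:ℚ_[p]) := by
          have h1 : B (x + y) (x + y) = B x x + B x y + B y x + B y y := by
            simp [map_add, LinearMap.add_apply]; ring
          rw [hc3, hc1, hc2, hcxy, hBsymm y x, hcxy] at h1
          linear_combination h1
        have hZ : c3 = c1 + cxy + c2 := by
          have h2 : ((c3 : ℚ_[p])) = ((c1 + cxy + c2 : ℤ_[p]) : ℚ_[p]) := by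
            push_cast
            linear_combination hexp / 2
          exact Subtype.coe_injective h2
        refine ⟨d3 - d1 - d2, ?_⟩
        have : cxy = (p : ℤ_[p]) * (d3 - d1 - d2) := by
          linear_combination -hZ + hd3 - hd1 - hd2
        rw [hcxy, this]
        push_cast
        ring
      · -- p odd
        have h2u : ¬ ((p : ℤ_[p]) ∣ (2 : ℤ_[p])) := not_p_dvd_two hp2
        have hq : ∀ x ∈ T, ∃ c : ℤ_[p], B x x = (c : ℚ_[p]) ∧ (p : ℤ_[p]) ∣ c := by
          intro x hx
          obtain ⟨c, hc⟩ := hTint x hx x hx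
          refine ⟨c, hc, ?_⟩
          by_contra hdvd
          have hu : IsUnit c := by
            rw [← PadicInt.norm_lt_one_iff_dvd] at hdvd
            rw [PadicInt.isUnit_iff]
            have h1 := PadicInt.norm_le_one c
            have h2 := not_lt.mp hdvd
            linarith
          have h2 : IsUnit (2 : ℤ_[p]) := by
            by_contra h2n
            exact h2u ((PadicInt.norm_lt_one_iff_dvd _).mp (PadicInt.not_isUnit_iff.mp h2n))
          obtain ⟨u, hu'⟩ := hu
          obtain ⟨u2, hu2⟩ := h2
          refine hcon x hx ((u2 * u⁻¹ : ℤ_[p]ˣ) : ℤ_[p]) (Units.isUnit _) ?_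
          rw [hc, ← hu']
          rw [← PadicInt.coe_mul]
          have : ((u2 * u⁻¹ : ℤ_[p]ˣ) : ℤ_[p]) * (u : ℤ_[p]) = 2 := by
            rw [← hu2]
            rw [Units.val_mul, mul_assoc]
            simp
          rw [this]
          norm_cast
        intro x hx y hy
        obtain ⟨c1, hc1, hd1⟩ := hq x hx
        obtain ⟨c2, hc2, hd2⟩ := hq y hy
        obtain ⟨c3, hc3, hd3⟩ := hq (x + y) (add_mem hx hy)
        obtain ⟨cxy, hcxy⟩ := hTint x hx y hy
        have hexp : ((c3:ℚ_[p])) = (c1:ℚ_[p]) + 2 * (cxy:ℚ_[p]) + (c2:ℚ_[p]) := by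
          have h1 : B (x + y) (x + y) = B x x + B x y + B y x + B y y := by
            simp [map_add, LinearMap.add_apply]; ring
          rw [hc3, hc1, hc2, hcxy, hBsymm y x, hcxy] at h1
          linear_combination h1
        have hZ : c3 = c1 + 2 * cxy + c2 := by
          have h2 : ((c3 : ℚ_[p])) = ((c1 + 2 * cxy + c2 : ℤ_[p]) : ℚ_[p]) := by
            have h22 : (2:ℚ_[p]) = ((2:ℤ_[p]) : ℚ_[p]) := by norm_cast
            push_cast
            linear_combination hexp + (cxy : ℚ_[p]) * h22
          exact Subtype.coe_injective h2
        have hdvdxy : (p : ℤ_[p]) ∣ 2 * cxy := by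
          have : 2 * cxy = c3 - c1 - c2 := by linear_combination -hZ
          rw [this]
          exact dvd_sub (dvd_sub hd3 hd1) hd2
        have hdxy : (p : ℤ_[p]) ∣ cxy :=
          (PadicInt.prime_p.dvd_mul.mp hdvdxy).resolve_left h2u
        obtain ⟨e, he⟩ := hdxy
        refine ⟨e, ?_⟩
        rw [hcxy, he]
        push_cast
        ring
    -- every (1/p) t is in the dual
    obtain ⟨k, w, hk, hwd, hgen⟩ := hlen
    set W : Submodule ℤ_[p] V := Submodule.span ℤ_[p] (Set.range w) with hW
    have hdual : ∀ t ∈ T, InDualP B T ((p : ℚ_[p])⁻¹ • t) := by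
      intro t ht y hy
      obtain ⟨c, hc⟩ := hdiv t ht y hy
      refine ⟨c, ?_⟩
      rw [map_smul, LinearMap.smul_apply, smul_eq_mul, hc]
      field_simp
    -- Nakayama
    set U : Submodule ℤ_[p] V := T ⊔ W with hU
    have hUfg : U.FG := Submodule.FG.sup hTfg (Submodule.fg_span (Set.finite_range w))
    have hmem : ∀ t ∈ T, t ∈ (IsLocalRing.maximalIdeal ℤ_[p]) • U := by
      intro t ht
      have hv : (p : ℚ_[p])⁻¹ • t ∈ U := hgen _ (hdual t ht)
      have hts : t = (p : ℤ_[p]) • ((p : ℚ_[p])⁻¹ • t) := by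
        rw [← hsm]
        rw [smul_smul, PadicInt.coe_natCast, mul_inv_cancel₀ hpQ, one_smul]
      rw [hts]
      refine Submodule.smul_mem_smul ?_ hv
      rw [PadicInt.maximalIdeal_eq_span_p]
      exact Ideal.mem_span_singleton_self _
    have hle : U ≤ W ⊔ (IsLocalRing.maximalIdeal ℤ_[p]) • U := by
      intro u hu
      rw [hU, Submodule.mem_sup] at hu
      obtain ⟨t, ht, s, hs, rfl⟩ := hu
      exact Submodule.add_mem _ (Submodule.mem_sup_right (hmem t ht)) (Submodule.mem_sup_left hs)
    have hjac : (IsLocalRing.maximalIdeal ℤ_[p]) ≤ Ideal.jacobson ⊥ := by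
      rw [IsLocalRing.jacobson_eq_maximalIdeal ⊥ bot_ne_top]
    have hUW : U ≤ W := Submodule.le_of_le_smul_of_le_jacobson_bot hUfg hjac hle
    have hTW : T ≤ W := le_trans le_sup_left (hU ▸ hUW)
    -- contradiction with dimension count
    have hspanW : Submodule.span ℚ_[p] (Set.range w) = ⊤ := by
      rw [eq_top_iff, ← hTspan]
      calc Submodule.span ℚ_[p] (T : Set V) ≤ Submodule.span ℚ_[p] (W : Set V) :=
            Submodule.span_mono hTW
        _ = Submodule.span ℚ_[p] (Set.range w) := by
            rw [hW, Submodule.span_span_of_tower]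
    have := finrank_le_of_span_eq_top hspanW
    simp [Fintype.card_fin] at this
    omega
  -- construct the reflection
  obtain ⟨x, hx, d, hdu, hd2⟩ := hex
  set f : Module.Dual ℚ_[p] V := (d : ℚ_[p]) • (B x) with hfdef
  have hfx : f x = 2 := by
    rw [hfdef]
    simpa using hd2
  have hfapp : ∀ v : V, f v = (d : ℚ_[p]) * B x v := by
    intro v; rw [hfdef]; simp
  refine ⟨Module.reflection hfx, ?_, ?_, det_reflection_aux hfx, ?_, ?_⟩
  · -- isometry
    intro v u
    rw [Module.reflection_apply, Module.reflection_apply]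
    simp only [map_sub, map_smul, LinearMap.sub_apply, LinearMap.smul_apply, smul_eq_mul, hfapp]
    linear_combination ((d:ℚ_[p]) * B x v * B x u) * hd2
      - ((d:ℚ_[p]) * B x u) * hBsymm v x
  · exact Module.involutive_reflection hfx
  · -- T stability
    have hfor : ∀ v ∈ T, Module.reflection hfx v ∈ T := by
      intro v hv
      obtain ⟨c, hc⟩ := hTint x hx v hv
      rw [Module.reflection_apply, hfapp, hc]
      have : ((d:ℚ_[p]) * (c:ℚ_[p])) • x = (d * c : ℤ_[p]) • x := by
        rw [← hsm]; push_cast; ring_nf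
      rw [this]
      exact sub_mem hv (Submodule.smul_mem T _ hx)
    intro v
    constructor
    · exact hfor v
    · intro hv
      have h2 := hfor _ hv
      rwa [Module.involutive_reflection hfx v] at h2
  · -- trivial action on discriminant group
    intro v hv
    obtain ⟨c, hc⟩ := hv x hx
    rw [Module.reflection_apply, hfapp]
    have hBxv : B x v = (c : ℚ_[p]) := by rw [← hBsymm v x, hc]
    rw [hBxv]
    have : v - ((d:ℚ_[p]) * (c:ℚ_[p])) • x - v = (-(d * c) : ℤ_[p]) • x := by
      rw [← hsm]; push_cast; module
    rw [this]
    exact Submodule.smul_mem T _ hx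
end

section
/- Let p be a prime and let T be a free ℤ_p-module of finite rank with a nondegenerate symmetric bilinear form B : T × T → ℤ_p, which is even (B(x,x) ∈ 2ℤ_2 for all x) if p = 2. If ℓ(A_T) < rank(T), then there exists x ∈ T with B(x,x) ∈ ℤ_p^× when p is odd, respectively with B(x,x) ∈ 2·ℤ_2^× when p = 2. -/
/-- Let `T` be a (full) `ℤ_p`-lattice in a nondegenerate `p`-adic
quadratic space, even when `p = 2`, with `ℓ(A_T) < rank T`.  Then there exists `x ∈ T`
with `B x x ∈ ℤ_p^×` when `p` is odd, respectively `B x x ∈ 2·ℤ_2^×` when `p = 2`. -/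
theorem padic_lattice_has_vector_of_unit_norm
    {p : ℕ} [Fact p.Prime] {V : Type*} [AddCommGroup V] [Module ℚ_[p] V]
    [Module ℤ_[p] V] [IsScalarTower ℤ_[p] ℚ_[p] V]
    (B : LinearMap.BilinForm ℚ_[p] V)
    (hBsymm : ∀ x y : V, B x y = B y x) (hBnd : B.Nondegenerate)
    (T : Submodule ℤ_[p] V)
    -- `T` is a full lattice, integral, and even if `p = 2`:
    (hTfg : T.FG) (hTspan : Submodule.span ℚ_[p] (T : Set V) = ⊤)
    (hTint : ∀ x ∈ T, ∀ y ∈ T, ∃ c : ℤ_[p], B x y = (c : ℚ_[p]))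
    (hTeven : p = 2 → ∀ x ∈ T, ∃ c : ℤ_[p], B x x = 2 * (c : ℚ_[p]))
    -- `ℓ(A_T) < rank T`: the discriminant group `A_T = T^∨/T` is generated by
    -- fewer than `rank T` elements:
    (hlen : ∃ (k : ℕ) (w : Fin k → V), k < Module.finrank ℚ_[p] V ∧
      (∀ i, InDualP B T (w i)) ∧
      ∀ v : V, InDualP B T v → v ∈ T ⊔ Submodule.span ℤ_[p] (Set.range w)) :
    ∃ x ∈ T, ∃ c : ℤ_[p], IsUnit c ∧
      ((p ≠ 2 ∧ B x x = (c : ℚ_[p])) ∨ (p = 2 ∧ B x x = 2 * (c : ℚ_[p]))) := by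
  by_contra hcon
  obtain ⟨k, w, hk, hw, hgen⟩ := hlen
  have hp : p.Prime := Fact.out
  have hp0 : (p : ℚ_[p]) ≠ 0 := Nat.cast_ne_zero.mpr hp.ne_zero
  -- Step 1: all diagonal values are divisible by `2p`.
  have hdiag : ∀ x ∈ T, ∃ d : ℤ_[p],
      B x x = 2 * (p : ℚ_[p]) * (d : ℚ_[p]) := by
    intro x hx
    by_cases hp2 : p = 2
    · obtain ⟨c, hc⟩ := hTeven hp2 x hx
      have hcu : ¬ IsUnit c := fun h => hcon ⟨x, hx, c, h, Or.inr ⟨hp2, hc⟩⟩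
      have hlt : ‖c‖ < 1 :=
        lt_of_le_of_ne c.2 (fun h => hcu (PadicInt.isUnit_iff.mpr h))
      obtain ⟨d, hd⟩ := (PadicInt.norm_lt_one_iff_dvd c).mp hlt
      refine ⟨d, ?_⟩
      rw [hc, hd]
      push_cast
      ring
    · obtain ⟨c, hc⟩ := hTint x hx x hx
      have hcu : ¬ IsUnit c := fun h => hcon ⟨x, hx, c, h, Or.inl ⟨hp2, hc⟩⟩
      have hlt : ‖c‖ < 1 :=
        lt_of_le_of_ne c.2 (fun h => hcu (PadicInt.isUnit_iff.mpr h))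
      obtain ⟨d, hd⟩ := (PadicInt.norm_lt_one_iff_dvd c).mp hlt
      -- `2` is a unit in `ℤ_[p]` since `p` is odd
      have h2u : IsUnit (2 : ℤ_[p]) := by
        rw [PadicInt.isUnit_iff]
        have hnd : ¬ ((p : ℤ) ∣ (2 : ℤ)) := by
          intro h
          have : p ∣ 2 := by exact_mod_cast h
          exact hp2 ((Nat.prime_dvd_prime_iff_eq hp Nat.prime_two).mp this)
        have := (PadicInt.norm_int_lt_one_iff_dvd (p := p) 2).not.mpr hnd
        have hle : ‖((2 : ℤ) : ℤ_[p])‖ ≤ 1 := PadicInt.norm_le_one _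
        have h1 : ‖((2 : ℤ) : ℤ_[p])‖ = 1 := le_antisymm hle (not_lt.mp this)
        simpa using h1
      obtain ⟨u, hu⟩ := h2u
      refine ⟨(↑u⁻¹ : ℤ_[p]) * d, ?_⟩
      have h2e : (2 : ℤ_[p]) * ((↑u⁻¹ : ℤ_[p]) * d) = d := by
        rw [← hu, ← mul_assoc, u.mul_inv, one_mul]
      have : B x x = ((((p : ℤ_[p])) * ((2 : ℤ_[p]) * ((↑u⁻¹ : ℤ_[p]) * d)) : ℤ_[p]) : ℚ_[p]) := by
        rw [h2e, ← hd, hc]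
      rw [this]
      push_cast
      rw [show ((2 : ℤ_[p]) : ℚ_[p]) = 2 from by
        rw [show (2 : ℤ_[p]) = ((2 : ℕ) : ℤ_[p]) by norm_num, PadicInt.coe_natCast]; norm_num]
      ring
  -- Step 2: all values of `B` on `T` are divisible by `p`.
  have key : ∀ x ∈ T, ∀ y ∈ T, ∃ c : ℤ_[p], B x y = (p : ℚ_[p]) * (c : ℚ_[p]) := by
    intro x hx y hy
    obtain ⟨d1, h1⟩ := hdiag (x + y) (T.add_mem hx hy)
    obtain ⟨d2, h2⟩ := hdiag x hx
    obtain ⟨d3, h3⟩ := hdiag y hy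
    refine ⟨d1 - d2 - d3, ?_⟩
    have hexp : B (x + y) (x + y) = B x x + 2 * B x y + B y y := by
      simp only [map_add, LinearMap.add_apply]
      rw [hBsymm y x]; ring
    rw [hexp] at h1
    have hcast : ((d1 - d2 - d3 : ℤ_[p]) : ℚ_[p]) = (d1 : ℚ_[p]) - d2 - d3 := by push_cast; ring
    have h2' : (2 : ℚ_[p]) * (B x y) =
        2 * ((p : ℚ_[p]) * ((d1 - d2 - d3 : ℤ_[p]) : ℚ_[p])) := by
      rw [hcast]; linear_combination h1 - h2 - h3
    exact mul_left_cancel₀ two_ne_zero h2'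
  -- Step 3: `p⁻¹ • T` lies in the dual lattice, hence in `T ⊔ span(w)`.
  set S := Submodule.span ℤ_[p] (Set.range w) with hSdef
  have hdual : ∀ x ∈ T, ((p : ℚ_[p])⁻¹ • x) ∈ T ⊔ S := by
    intro x hx
    apply hgen
    intro y hy
    obtain ⟨c, hc⟩ := key x hx y hy
    refine ⟨c, ?_⟩
    rw [map_smul, LinearMap.smul_apply, hc, smul_eq_mul, inv_mul_cancel_left₀ hp0]
  -- Step 4: Nakayama's lemma in `V ⧸ S` forces `T ≤ S`.
  set N := T.map S.mkQ with hNdef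
  have hNfg : N.FG := hTfg.map _
  have hNle : N ≤ (Ideal.span {(p : ℤ_[p])}) • N := by
    rintro _ ⟨x, hx, rfl⟩
    have ht := hdual x hx
    rw [Submodule.mem_sup] at ht
    obtain ⟨t, htT, s, hsS, hts⟩ := ht
    have hsmul : (p : ℤ_[p]) • ((p : ℚ_[p])⁻¹ • x) = x := by
      rw [← algebraMap_smul ℚ_[p] ((p : ℕ) : ℤ_[p]) ((p : ℚ_[p])⁻¹ • x),
        PadicInt.algebraMap_apply, PadicInt.coe_natCast, smul_smul,
        mul_inv_cancel₀ hp0, one_smul]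
    have hx' : x = (p : ℤ_[p]) • t + (p : ℤ_[p]) • s := by
      rw [← hsmul, ← hts, smul_add]
    have hmk : S.mkQ x = (p : ℤ_[p]) • S.mkQ t := by
      rw [hx', map_add, map_smul, map_smul]
      have : S.mkQ s = 0 := by
        rw [Submodule.mkQ_apply, Submodule.Quotient.mk_eq_zero]
        exact hsS
      rw [this, smul_zero, add_zero]
    rw [hmk]
    exact Submodule.smul_mem_smul (Ideal.mem_span_singleton_self _) ⟨t, htT, rfl⟩
  have hjac : (Ideal.span {(p : ℤ_[p])}) ≤ Ideal.jacobson ⊥ := by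
    rw [IsLocalRing.jacobson_eq_maximalIdeal (⊥ : Ideal ℤ_[p]) bot_ne_top,
      ← PadicInt.maximalIdeal_eq_span_p]
  have hbot : N = ⊥ :=
    Submodule.eq_bot_of_le_smul_of_le_jacobson_bot _ N hNfg hNle hjac
  have hTS : T ≤ S := by
    intro x hx
    have hmem : S.mkQ x ∈ N := ⟨x, hx, rfl⟩
    rw [hbot, Submodule.mem_bot, Submodule.mkQ_apply,
      Submodule.Quotient.mk_eq_zero] at hmem
    exact hmem
  -- Step 5: contradiction with `k < rank T`.
  have htop : Submodule.span ℚ_[p] (Set.range w) = ⊤ := by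
    rw [eq_top_iff, ← hTspan]
    apply Submodule.span_le.mpr
    intro x hx
    have hxS : x ∈ S := hTS hx
    have hle : S ≤ (Submodule.span ℚ_[p] (Set.range w)).restrictScalars ℤ_[p] :=
      Submodule.span_le.mpr Submodule.subset_span
    exact hle hxS
  have hcard := finrank_range_le_card (R := ℚ_[p]) w
  unfold Set.finrank at hcard
  rw [htop, finrank_top, Fintype.card_fin] at hcard
  exact absurd hk (not_lt.mpr hcard)
end
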